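/- arXiv:1607.06315 — 8 statements merged into one kernel-verified Lean document; each statement's English description precedes it below -/
import Mathlib

section
/- For every prime p and every natural number j ≥ 1, the complete graph K_{p^j} has a K_p-decomposition, i.e., its edge set can be partitioned into edge sets of copies of K_p. -/
/-!
The affine lines of `𝔽_p^j` form a Steiner system `S(2, p, p^j)`: each line has `p` points and
two distinct points `x, y` lie on exactly one line, namely `{x + t • (y - x)}`. Hence the
edge sets of the lines partition the edges of the complete graph on `𝔽_p^j ≃ Fin (p^j)`.
-/

/-- The edge set of the complete graph on a finite vertex set `S`: all non-diagonal
unordered pairs of elements of `S`. -/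
def cliqueEdges {V : Type*} [DecidableEq V] (S : Finset V) : Finset (Sym2 V) :=
  S.sym2.filter (fun e => ¬ e.IsDiag)

/-- A graph `G` has a `K_p`-decomposition: a list of `p`-element cliques of `G` whose
edge sets are pairwise disjoint and together cover the edge set of `G`. -/
def SimpleGraph.HasCliqueDecomp {V : Type*} [DecidableEq V] (G : SimpleGraph V) (p : ℕ) : Prop :=
  ∃ l : List (Finset V),
    (∀ S ∈ l, S.card = p ∧ ∀ x ∈ S, ∀ y ∈ S, x ≠ y → G.Adj x y) ∧
    l.Pairwise (fun S T => Disjoint (cliqueEdges S) (cliqueEdges T)) ∧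
    (∀ e, e ∈ G.edgeSet ↔ ∃ S ∈ l, e ∈ cliqueEdges S)

lemma mk_mem_cliqueEdges {V : Type*} [DecidableEq V] {S : Finset V} {x y : V} :
    s(x, y) ∈ cliqueEdges S ↔ x ∈ S ∧ y ∈ S ∧ x ≠ y := by
  simp [cliqueEdges, and_assoc]

/-- A Steiner system `S(2, k, |V|)` on `V`, with blocks `L`. -/
structure IsSteinerSystem {V : Type*} (L : Finset (Finset V)) (k : ℕ) : Prop where
  card_eq : ∀ S ∈ L, S.card = k
  existsUnique_mem : ∀ x y, x ≠ y → ∃! S, S ∈ L ∧ x ∈ S ∧ y ∈ S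

namespace IsSteinerSystem

variable {V W : Type*} {L : Finset (Finset V)} {k : ℕ}

lemma map [DecidableEq W] (h : IsSteinerSystem L k) (e : V ≃ W) :
    IsSteinerSystem (L.image (Finset.map e.toEmbedding)) k where
  card_eq := by
    simp only [Finset.mem_image]
    rintro _ ⟨S, hS, rfl⟩
    rw [Finset.card_map, h.card_eq S hS]
  existsUnique_mem x y hxy := by
    obtain ⟨S, ⟨hS, hxS, hyS⟩, huniq⟩ :=
      h.existsUnique_mem (e.symm x) (e.symm y) (e.symm.injective.ne hxy)
    refine ⟨S.map e.toEmbedding, ⟨Finset.mem_image_of_mem _ hS, ?_, ?_⟩, ?_⟩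
    · rwa [Finset.mem_map_equiv]
    · rwa [Finset.mem_map_equiv]
    · rintro _ ⟨hT', hxT, hyT⟩
      obtain ⟨T, hT, rfl⟩ := Finset.mem_image.1 hT'
      rw [Finset.mem_map_equiv] at hxT hyT
      rw [huniq T ⟨hT, hxT, hyT⟩]

lemma hasCliqueDecomp_top [DecidableEq V] (h : IsSteinerSystem L k) :
    (⊤ : SimpleGraph V).HasCliqueDecomp k := by
  refine ⟨L.toList, fun S hS => ⟨h.card_eq S (Finset.mem_toList.1 hS), fun _ _ _ _ => id⟩,
    L.nodup_toList.imp_of_mem fun {S T} hS hT hST => ?_, fun e => ?_⟩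
  · rw [Finset.mem_toList] at hS hT
    refine Finset.disjoint_left.2 fun e heS heT => ?_
    induction e using Sym2.ind with
    | _ x y =>
      rw [mk_mem_cliqueEdges] at heS heT
      exact hST ((h.existsUnique_mem x y heS.2.2).unique ⟨hS, heS.1, heS.2.1⟩
        ⟨hT, heT.1, heT.2.1⟩)
  · induction e using Sym2.ind with
    | _ x y =>
      simp only [SimpleGraph.mem_edgeSet, SimpleGraph.top_adj, Finset.mem_toList,
        mk_mem_cliqueEdges]
      refine ⟨fun hxy => ?_, fun ⟨_, _, _, _, hxy⟩ => hxy⟩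
      obtain ⟨S, ⟨hS, hxS, hyS⟩, -⟩ := h.existsUnique_mem x y hxy
      exact ⟨S, hS, hxS, hyS, hxy⟩

end IsSteinerSystem

section AffineLines

variable {K V : Type*} [Field K] [Fintype K] [AddCommGroup V] [Module K V] [DecidableEq V]

variable (K) in
def affineLine (a d : V) : Finset V :=
  Finset.univ.image fun t : K => a + t • d

variable {a d x y : V}

lemma mem_affineLine : x ∈ affineLine K a d ↔ ∃ t : K, a + t • d = x := by
  simp [affineLine]

lemma card_affineLine (hd : d ≠ 0) : (affineLine K a d).card = Fintype.card K := by
  rw [affineLine, Finset.card_image_of_injective _ fun s t h => ?_, Finset.card_univ]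
  exact smul_left_injective K hd (add_left_cancel h)

lemma affineLine_smul {c : K} (hc : c ≠ 0) : affineLine K a (c • d) = affineLine K a d := by
  ext x
  simp only [mem_affineLine]
  constructor
  · rintro ⟨t, rfl⟩
    exact ⟨t * c, by rw [mul_smul]⟩
  · rintro ⟨t, rfl⟩
    exact ⟨t * c⁻¹, by rw [smul_smul, mul_assoc, inv_mul_cancel₀ hc, mul_one]⟩

lemma affineLine_add_smul (s : K) : affineLine K (a + s • d) d = affineLine K a d := by
  ext x
  simp only [mem_affineLine]
  constructor
  · rintro ⟨t, rfl⟩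
    exact ⟨s + t, by rw [add_smul]; abel⟩
  · rintro ⟨t, rfl⟩
    exact ⟨t - s, by rw [sub_smul]; abel⟩

lemma affineLine_eq_of_mem (hx : x ∈ affineLine K a d) (hy : y ∈ affineLine K a d)
    (hxy : x ≠ y) : affineLine K a d = affineLine K x (y - x) := by
  obtain ⟨t, rfl⟩ := mem_affineLine.1 hx
  obtain ⟨s, rfl⟩ := mem_affineLine.1 hy
  have hst : s - t ≠ 0 := sub_ne_zero.2 fun h => hxy (by rw [h])
  have hyx : (a + s • d) - (a + t • d) = (s - t) • d := by rw [sub_smul]; abel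
  rw [hyx, affineLine_smul hst, affineLine_add_smul]

variable (K V) in
def affineLines [Fintype V] : Finset (Finset V) :=
  (Finset.univ.filter fun q : V × V => q.1 ≠ q.2).image fun q => affineLine K q.1 (q.2 - q.1)

lemma isSteinerSystem_affineLines [Fintype V] :
    IsSteinerSystem (affineLines K V) (Fintype.card K) where
  card_eq S hS := by
    obtain ⟨⟨a, b⟩, hab, rfl⟩ := Finset.mem_image.1 hS
    exact card_affineLine (sub_ne_zero.2 (Finset.mem_filter.1 hab).2.symm)
  existsUnique_mem x y hxy := by
    have hline : ∀ S ∈ affineLines K V, x ∈ S → y ∈ S → S = affineLine K x (y - x) := by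
      rintro S hS hxS hyS
      obtain ⟨⟨a, b⟩, -, rfl⟩ := Finset.mem_image.1 hS
      exact affineLine_eq_of_mem hxS hyS hxy
    refine ⟨affineLine K x (y - x), ⟨?_, ?_, ?_⟩, fun S ⟨hS, hxS, hyS⟩ => hline S hS hxS hyS⟩
    · exact Finset.mem_image.2 ⟨(x, y), Finset.mem_filter.2 ⟨Finset.mem_univ _, hxy⟩, rfl⟩
    · exact mem_affineLine.2 ⟨0, by simp⟩
    · exact mem_affineLine.2 ⟨1, by simp⟩

end AffineLines

theorem stmt_1_general (p : ℕ) (hp : p.Prime) (j : ℕ) :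
    (⊤ : SimpleGraph (Fin (p ^ j))).HasCliqueDecomp p := by
  have : Fact p.Prime := ⟨hp⟩
  have hcard : Fintype.card (Fin j → ZMod p) = Fintype.card (Fin (p ^ j)) := by
    simp [ZMod.card]
  have hlines : IsSteinerSystem (affineLines (ZMod p) (Fin j → ZMod p)) p := by
    simpa [ZMod.card] using isSteinerSystem_affineLines (K := ZMod p) (V := Fin j → ZMod p)
  exact (hlines.map (Fintype.equivOfCardEq hcard)).hasCliqueDecomp_top

/-- For every prime `p` and every `j ≥ 1`, the complete graph `K_{p^j}` has a
`K_p`-decomposition. -/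
theorem stmt_1 (p : ℕ) (hp : p.Prime) (j : ℕ) (hj : 1 ≤ j) :
    (⊤ : SimpleGraph (Fin (p ^ j))).HasCliqueDecomp p :=
  stmt_1_general p hp j
end

section
/- For every m ≥ 1, the graph G on 12m+3 vertices formed from disjoint sets A, B, C of sizes 4m+2, 4m+3, 4m−2 respectively, whose edges are all pairs inside A, all pairs inside C, and all pairs between A∪C and B, satisfies: every vertex has even degree, 4 divides e(G), and the minimum degree of G is 8m = 2|G|/3 − 2, yet G has no C_4-decomposition. -/
/-!
Every edge of `G` lies inside `A`, inside `C`, or between `B` and `A ∪ C`. Checking the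
three-vertex pattern of these blocks shows that a closed walk of length four uses an even number
of edges inside `A`, so in a `C₄`-decomposition the number of edges inside `A` would be even.
But `A` is a clique on `4m + 2` vertices and spans `(2m + 1)(4m + 1)` edges, an odd number.
The divisibility conditions are direct counts: vertices of `A` have degree `8m + 4`, all
others degree `8m`.
-/

def SimpleGraph.HasCycleDecomp {V : Type*} (G : SimpleGraph V) (k : ℕ) : Prop :=
  ∃ l : List ((v : V) × G.Walk v v),
    (∀ p ∈ l, p.2.IsCycle ∧ p.2.length = k) ∧
    l.Pairwise (fun p q => p.2.edges.Disjoint q.2.edges) ∧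
    (∀ e, e ∈ G.edgeSet ↔ ∃ p ∈ l, e ∈ p.2.edges)

open Finset

namespace SimpleGraph

variable {V : Type*} [DecidableEq V] {G : SimpleGraph V}

theorem HasCycleDecomp.even_card_filter_edgeFinset [Fintype G.edgeSet] {k : ℕ}
    (h : G.HasCycleDecomp k) (P : Sym2 V → Prop) [DecidablePred P]
    (hP : ∀ v (c : G.Walk v v), c.IsCycle → c.length = k → Even (c.edges.countP (P ·))) :
    Even #(G.edgeFinset.filter P) := by
  obtain ⟨l, hcyc, hdisj, hcover⟩ := h
  set J := l.flatMap fun p => p.2.edges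
  have hJ : J.Nodup := List.nodup_flatMap.2 ⟨fun p hp => (hcyc p hp).1.edges_nodup, hdisj⟩
  have hJG : J.toFinset = G.edgeFinset := by
    ext e
    simp [J, hcover]
  have hcount : #(J.toFinset.filter P) = J.countP (P ·) := by
    rw [List.countP_eq_length_filter, ← List.toFinset_card_of_nodup (hJ.filter _),
      List.toFinset_filter]
    simp
  rw [← hJG, hcount, List.countP_flatMap, even_iff_two_dvd]
  refine List.dvd_sum fun n hn => ?_
  obtain ⟨p, hp, rfl⟩ := List.mem_map.1 hn
  exact even_iff_two_dvd.1 (hP _ _ (hcyc p hp).1 (hcyc p hp).2)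

theorem card_edgeFinset_inter_sym2_of_isClique [Fintype V] [DecidableRel G.Adj] {s : Finset V}
    (hs : G.IsClique (s : Set V)) : #(G.edgeFinset ∩ s.sym2) = (#s).choose 2 := by
  have hmap := map_edgeFinset_induce (G := G) (s := (s : Set V))
  rw [Finset.toFinset_coe] at hmap
  rw [← hmap, card_map]
  convert card_edgeFinset_top_eq_card_choose_two (V := (s : Set V)) using 3
  · exact induce_eq_top.2 hs
  · simp

end SimpleGraph

/-- Which blocks may contain adjacent vertices, with `0, 1, 2` standing for `A, B, C`. -/
def BlockAdj (a b : Fin 3) : Prop :=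
  (a = 0 ∧ b = 0) ∨ (a = 2 ∧ b = 2) ∨ (a = 1 ∧ b ≠ 1) ∨ (b = 1 ∧ a ≠ 1)

instance : DecidableRel BlockAdj := fun _ _ => inferInstanceAs (Decidable (_ ∨ _))

theorem BlockAdj.even_countP_square :
    ∀ a b c d : Fin 3, BlockAdj a b → BlockAdj b c → BlockAdj c d → BlockAdj d a →
      Even ([s(a, b), s(b, c), s(c, d), s(d, a)].countP (· = s(0, 0))) := by
  decide

theorem SimpleGraph.Walk.even_countP_mem_sym2_of_length_eq_four {V : Type*} [DecidableEq V]
    {G : SimpleGraph V} (f : V → Fin 3) (hf : ∀ x y, G.Adj x y → BlockAdj (f x) (f y))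
    {A : Finset V} (hA : ∀ x, x ∈ A ↔ f x = 0) {v : V} (w : G.Walk v v) (hw : w.length = 4) :
    Even (w.edges.countP (· ∈ A.sym2)) := by
  rcases w with _ | ⟨h₁, _ | ⟨h₂, _ | ⟨h₃, _ | ⟨h₄, _ | ⟨_, _⟩⟩⟩⟩⟩ <;> simp at hw
  simpa [List.countP_cons, hA] using
    BlockAdj.even_countP_square _ _ _ _ (hf _ _ h₁) (hf _ _ h₂) (hf _ _ h₃) (hf _ _ h₄)

theorem Nat.odd_choose_two_four_mul_add_two (m : ℕ) : Odd ((4 * m + 2).choose 2) := by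
  rw [Nat.choose_two_right, show (4 * m + 2) * (4 * m + 2 - 1) = (2 * m + 1) * (4 * m + 1) * 2 by
    rw [show 4 * m + 2 - 1 = 4 * m + 1 by omega]; ring, Nat.mul_div_cancel _ two_pos]
  exact Nat.odd_mul.2 ⟨⟨m, rfl⟩, ⟨2 * m, by ring⟩⟩

def c4ExtremalGraph (m : ℕ) : SimpleGraph (Fin (12 * m + 2 + 1)) where
  Adj x y := x ≠ y ∧
      ((x.val < 4 * m + 2 ∧ y.val < 4 * m + 2) ∨
       (8 * m + 5 ≤ x.val ∧ 8 * m + 5 ≤ y.val) ∨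
       ((4 * m + 2 ≤ x.val ∧ x.val < 8 * m + 5) ↔ ¬ (4 * m + 2 ≤ y.val ∧ y.val < 8 * m + 5)))
  symm := ⟨fun x y h => by omega⟩
  loopless := ⟨fun x h => h.1 rfl⟩

namespace c4ExtremalGraph

variable {m : ℕ}

theorem adj_iff {x y : Fin (12 * m + 2 + 1)} :
    (c4ExtremalGraph m).Adj x y ↔ x ≠ y ∧
      ((x.val < 4 * m + 2 ∧ y.val < 4 * m + 2) ∨
       (8 * m + 5 ≤ x.val ∧ 8 * m + 5 ≤ y.val) ∨
       ((4 * m + 2 ≤ x.val ∧ x.val < 8 * m + 5) ↔ ¬ (4 * m + 2 ≤ y.val ∧ y.val < 8 * m + 5))) :=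
  Iff.rfl

def block (m : ℕ) (x : Fin (12 * m + 2 + 1)) : Fin 3 :=
  if x.val < 4 * m + 2 then 0 else if x.val < 8 * m + 5 then 1 else 2

theorem blockAdj_block {x y : Fin (12 * m + 2 + 1)} (h : (c4ExtremalGraph m).Adj x y) :
    BlockAdj (block m x) (block m y) := by
  rw [adj_iff] at h
  unfold block
  split_ifs <;> first | decide | omega

def blockA (m : ℕ) : Finset (Fin (12 * m + 2 + 1)) := {x | x.val < 4 * m + 2}

theorem mem_blockA_iff {x : Fin (12 * m + 2 + 1)} : x ∈ blockA m ↔ block m x = 0 := by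
  unfold blockA block
  split_ifs <;> simp [*]

theorem isClique_blockA : (c4ExtremalGraph m).IsClique (blockA m : Set (Fin (12 * m + 2 + 1))) :=
  fun x hx y hy hxy => by
    simp only [blockA, coe_filter, mem_univ, true_and, Set.mem_ofPred_eq] at hx hy
    exact ⟨hxy, Or.inl ⟨hx, hy⟩⟩

theorem card_blockA : #(blockA m) = 4 * m + 2 := by
  rw [blockA, Fin.card_filter_val_lt]
  omega

theorem not_hasCycleDecomp_four : ¬ (c4ExtremalGraph m).HasCycleDecomp 4 := by
  classical
  intro h
  have heven := h.even_card_filter_edgeFinset (· ∈ (blockA m).sym2) fun _ c _ hc =>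
    c.even_countP_mem_sym2_of_length_eq_four (block m) (fun _ _ => blockAdj_block)
      (fun _ => mem_blockA_iff) hc
  rw [filter_mem_eq_inter, SimpleGraph.card_edgeFinset_inter_sym2_of_isClique isClique_blockA,
    card_blockA] at heven
  exact Nat.not_even_iff_odd.2 (Nat.odd_choose_two_four_mul_add_two m) heven

variable [DecidableRel (c4ExtremalGraph m).Adj]

theorem degree_eq (hm : 1 ≤ m) (v : Fin (12 * m + 2 + 1)) :
    (c4ExtremalGraph m).degree v = 8 * m + if v.val < 4 * m + 2 then 4 else 0 := by
  rw [← SimpleGraph.card_neighborFinset_eq_degree]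
  by_cases hA : v.val < 4 * m + 2
  · have : (c4ExtremalGraph m).neighborFinset v = (Iio ⟨8 * m + 5, by omega⟩).erase v := by
      ext y
      simp only [SimpleGraph.mem_neighborFinset, adj_iff, mem_erase, mem_Iio, Fin.lt_def,
        Fin.ext_iff, ne_eq]
      omega
    rw [this, card_erase_of_mem (by simp [Fin.lt_def]; omega), Fin.card_Iio, Fin.val_mk, if_pos hA]
    omega
  by_cases hB : v.val < 8 * m + 5
  · have : (c4ExtremalGraph m).neighborFinset v =
        (Ico ⟨4 * m + 2, by omega⟩ ⟨8 * m + 5, by omega⟩)ᶜ := by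
      ext y
      simp only [SimpleGraph.mem_neighborFinset, adj_iff, mem_compl, mem_Ico, Fin.lt_def,
        Fin.le_def, Fin.ext_iff, ne_eq]
      omega
    rw [this, card_compl, Fin.card_Ico, Fin.val_mk, Fin.val_mk, Fintype.card_fin, if_neg hA]
    omega
  · have : (c4ExtremalGraph m).neighborFinset v = (Ici ⟨4 * m + 2, by omega⟩).erase v := by
      ext y
      simp only [SimpleGraph.mem_neighborFinset, adj_iff, mem_erase, mem_Ici, Fin.le_def,
        Fin.ext_iff, ne_eq]
      omega
    rw [this, card_erase_of_mem (by simp [Fin.le_def]; omega), Fin.card_Ici, Fin.val_mk, if_neg hA]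
    omega

theorem even_degree (hm : 1 ≤ m) (v : Fin (12 * m + 2 + 1)) :
    Even ((c4ExtremalGraph m).degree v) := by
  rw [degree_eq hm]
  split_ifs
  · exact ⟨4 * m + 2, by ring⟩
  · exact ⟨4 * m, by ring⟩

theorem card_edgeFinset (hm : 1 ≤ m) :
    #(c4ExtremalGraph m).edgeFinset = 4 * (12 * m ^ 2 + 5 * m + 1) := by
  have h := (c4ExtremalGraph m).sum_degrees_eq_twice_card_edges
  simp only [degree_eq hm, sum_add_distrib, sum_const, card_univ, Fintype.card_fin, smul_eq_mul,
    sum_ite, mul_zero, add_zero, Fin.card_filter_val_lt,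
    min_eq_right (show 4 * m + 2 ≤ 12 * m + 2 + 1 by omega)] at h
  linarith

theorem minDegree_eq (hm : 1 ≤ m) : (c4ExtremalGraph m).minDegree = 8 * m := by
  refine le_antisymm ?_ ((c4ExtremalGraph m).le_minDegree_of_forall_le_degree _ fun v => by
    rw [degree_eq hm]; omega)
  have h := (c4ExtremalGraph m).minDegree_le_degree ⟨8 * m + 5, by omega⟩
  rwa [degree_eq hm, Fin.val_mk, if_neg (by omega), add_zero] at h

end c4ExtremalGraph

/-- The extremal example for `C₄`: on `12m+3` vertices split into sets `A`, `B`, `C` of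
sizes `4m+2`, `4m+3`, `4m-2` (here `A` consists of the vertices with value `< 4m+2`,
`B` of those with value in `[4m+2, 8m+5)`, and `C` of the rest), the graph whose edges
are all pairs inside `A`, all pairs inside `C`, and all pairs between `A ∪ C` and `B`
is `C₄`-divisible, has minimum degree `8m = 2|G|/3 - 2`, but has no
`C₄`-decomposition. -/
theorem stmt_3 (m : ℕ) (hm : 1 ≤ m) (G : SimpleGraph (Fin (12 * m + 2 + 1)))
    [DecidableRel G.Adj]
    (hadj : ∀ x y : Fin (12 * m + 2 + 1), G.Adj x y ↔ x ≠ y ∧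
      ((x.val < 4 * m + 2 ∧ y.val < 4 * m + 2) ∨
       (8 * m + 5 ≤ x.val ∧ 8 * m + 5 ≤ y.val) ∨
       ((4 * m + 2 ≤ x.val ∧ x.val < 8 * m + 5) ↔ ¬ (4 * m + 2 ≤ y.val ∧ y.val < 8 * m + 5)))) :
    (∀ v, Even (G.degree v)) ∧ 4 ∣ G.edgeFinset.card ∧
      G.minDegree = 8 * m ∧ 8 * m = 2 * Fintype.card (Fin (12 * m + 2 + 1)) / 3 - 2 ∧
      ¬ G.HasCycleDecomp 4 := by
  obtain rfl : G = c4ExtremalGraph m := SimpleGraph.ext (funext₂ fun x y => propext (hadj x y))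
  refine ⟨c4ExtremalGraph.even_degree hm, ?_, c4ExtremalGraph.minDegree_eq hm, ?_,
    c4ExtremalGraph.not_hasCycleDecomp_four⟩
  · rw [c4ExtremalGraph.card_edgeFinset hm]
    exact dvd_mul_right _ _
  · rw [Fintype.card_fin]
    omega
end

section
/- Let G be a graph on n vertices with minimum degree at least 2n/3 − 1 in which every vertex has even degree, and suppose V(G) is partitioned into nonempty sets A, B, C with e(A,C) = e(B) = 0. Then n ≡ 1 (mod 3); moreover, writing n = 3N+1, we have |A| = |C| = N, |B| = N+1, the graphs G[A], G[C], and G[B, A∪C] are complete, and G is 2N-regular. -/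
open Finset

variable {V : Type*} [Fintype V] [DecidableEq V] [Nonempty V]

/-- The set of edges of `G` with one endpoint in `X` and the other in `Y`
(for disjoint `X`, `Y`). -/
def crossEdges (G : SimpleGraph V) [DecidableRel G.Adj] (X Y : Finset V) : Finset (Sym2 V) :=
  G.edgeFinset.filter fun e => ∃ a ∈ X, ∃ b ∈ Y, e = s(a, b)

/-- The set of edges of `G` with both endpoints in `X`. -/
def innerEdges (G : SimpleGraph V) [DecidableRel G.Adj] (X : Finset V) : Finset (Sym2 V) :=
  G.edgeFinset.filter fun e => ∀ a ∈ e, a ∈ X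

/-
Summing the degree bounds at a vertex of each part, `δ ≤ |A| + |B| - 1`, `δ ≤ |A| + |C|` and
`δ ≤ |B| + |C| - 1`, gives `3δ ≤ 2n - 2`; with `2n ≤ 3δ + 3` and `δ` even this forces
`3δ + 3 = 2n + 1`, so `n = 3N + 1`, `δ = 2N`, and all three bounds are equalities. Then every
vertex of `A` is adjacent to all of `A ∪ B` but itself, and likewise for `C`.
-/

section

variable {α : Type*} [Fintype α] {G : SimpleGraph α} [DecidableRel G.Adj]

theorem even_minDegree [Nonempty α] (h : ∀ v, Even (G.degree v)) : Even G.minDegree := by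
  obtain ⟨v, hv⟩ := G.exists_minimal_degree_vertex
  exact hv ▸ h v

theorem degree_le_card_of_neighborFinset_subset {v : α} {s : Finset α}
    (h : G.neighborFinset v ⊆ s) : G.degree v ≤ s.card :=
  G.card_neighborFinset_eq_degree v ▸ card_le_card h

variable [DecidableEq α]

theorem degree_lt_card_of_neighborFinset_subset_erase {v : α} {s : Finset α}
    (h : G.neighborFinset v ⊆ s.erase v) (hv : v ∈ s) : G.degree v < s.card :=
  (degree_le_card_of_neighborFinset_subset h).trans_lt (card_erase_lt_of_mem hv)

theorem adj_of_neighborFinset_subset_erase {v w : α} {s : Finset α}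
    (h : G.neighborFinset v ⊆ s.erase v) (hs : s.card ≤ G.minDegree + 1) (hv : v ∈ s)
    (hw : w ∈ s) (hvw : v ≠ w) : G.Adj v w := by
  have hcard : (s.erase v).card ≤ (G.neighborFinset v).card := by
    rw [card_erase_of_mem hv, G.card_neighborFinset_eq_degree]
    have := G.minDegree_le_degree v
    omega
  rw [← G.mem_neighborFinset, eq_of_subset_of_card_le h hcard]
  exact mem_erase.2 ⟨hvw.symm, hw⟩

theorem neighborFinset_subset_erase_of_forall_not_adj {v : α} {s X : Finset α}
    (hcover : s ∪ X = univ) (hX : ∀ w ∈ X, ¬G.Adj v w) : G.neighborFinset v ⊆ s.erase v := by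
  intro w hw
  rw [SimpleGraph.mem_neighborFinset] at hw
  refine mem_erase.2 ⟨hw.ne.symm, ?_⟩
  have : w ∈ s ∪ X := hcover ▸ mem_univ w
  exact (mem_union.1 this).resolve_right fun hwX => hX w hwX hw

theorem crossEdges_comm (X Y : Finset α) : crossEdges G X Y = crossEdges G Y X := by
  ext e
  simp only [crossEdges, mem_filter]
  constructor <;> rintro ⟨he, a, ha, b, hb, rfl⟩ <;> exact ⟨he, b, hb, a, ha, Sym2.eq_swap⟩

theorem not_adj_of_crossEdges_eq_empty {X Y : Finset α} (h : crossEdges G X Y = ∅)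
    {x y : α} (hx : x ∈ X) (hy : y ∈ Y) : ¬G.Adj x y := fun hxy => by
  have : s(x, y) ∈ crossEdges G X Y :=
    mem_filter.2 ⟨G.mem_edgeFinset.2 hxy, x, hx, y, hy, rfl⟩
  simp [h] at this

theorem not_adj_of_innerEdges_eq_empty {X : Finset α} (h : innerEdges G X = ∅)
    {x y : α} (hx : x ∈ X) (hy : y ∈ X) : ¬G.Adj x y := fun hxy => by
  have : s(x, y) ∈ innerEdges G X := mem_filter.2
    ⟨G.mem_edgeFinset.2 hxy, fun a ha => by rcases Sym2.mem_iff.1 ha with rfl | rfl <;> assumption⟩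
  simp [h] at this

variable {A B C : Finset α}

theorem neighborFinset_subset_of_mem_left (hunion : A ∪ B ∪ C = univ)
    (hac : crossEdges G A C = ∅) {u : α} (hu : u ∈ A) : G.neighborFinset u ⊆ (A ∪ B).erase u :=
  neighborFinset_subset_erase_of_forall_not_adj hunion fun _ hw =>
    not_adj_of_crossEdges_eq_empty hac hu hw

theorem neighborFinset_subset_of_mem_right (hunion : A ∪ B ∪ C = univ)
    (hac : crossEdges G A C = ∅) {w : α} (hw : w ∈ C) : G.neighborFinset w ⊆ (C ∪ B).erase w :=
  neighborFinset_subset_of_mem_left (C := A) (by rw [← hunion]; ac_rfl) (by rwa [crossEdges_comm]) hw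

theorem neighborFinset_subset_of_mem_middle (hunion : A ∪ B ∪ C = univ)
    (hb : innerEdges G B = ∅) {v : α} (hv : v ∈ B) : G.neighborFinset v ⊆ A ∪ C :=
  (neighborFinset_subset_erase_of_forall_not_adj (X := B) (by rw [← hunion]; ac_rfl)
    fun _ hw => not_adj_of_innerEdges_eq_empty hb hv hw).trans (erase_subset _ _)

theorem degree_lt_of_mem_left (hunion : A ∪ B ∪ C = univ) (hAB : Disjoint A B)
    (hac : crossEdges G A C = ∅) {u : α} (hu : u ∈ A) : G.degree u < A.card + B.card :=
  card_union_of_disjoint hAB ▸ degree_lt_card_of_neighborFinset_subset_erase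
    (neighborFinset_subset_of_mem_left hunion hac hu) (mem_union_left _ hu)

theorem degree_lt_of_mem_right (hunion : A ∪ B ∪ C = univ) (hBC : Disjoint B C)
    (hac : crossEdges G A C = ∅) {w : α} (hw : w ∈ C) : G.degree w < B.card + C.card :=
  add_comm C.card B.card ▸ card_union_of_disjoint hBC.symm ▸
    degree_lt_card_of_neighborFinset_subset_erase
      (neighborFinset_subset_of_mem_right hunion hac hw) (mem_union_left _ hw)

theorem degree_le_of_mem_middle (hunion : A ∪ B ∪ C = univ) (hAC : Disjoint A C)
    (hb : innerEdges G B = ∅) {v : α} (hv : v ∈ B) : G.degree v ≤ A.card + C.card :=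
  card_union_of_disjoint hAC ▸
    degree_le_card_of_neighborFinset_subset (neighborFinset_subset_of_mem_middle hunion hb hv)

theorem adj_of_mem_left (hunion : A ∪ B ∪ C = univ) (hac : crossEdges G A C = ∅)
    (hcard : (A ∪ B).card ≤ G.minDegree + 1) {x y : α} (hx : x ∈ A) (hy : y ∈ A ∪ B)
    (hxy : x ≠ y) : G.Adj x y :=
  adj_of_neighborFinset_subset_erase (neighborFinset_subset_of_mem_left hunion hac hx) hcard
    (mem_union_left _ hx) hy hxy

theorem adj_of_mem_right (hunion : A ∪ B ∪ C = univ) (hac : crossEdges G A C = ∅)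
    (hcard : (C ∪ B).card ≤ G.minDegree + 1) {x y : α} (hx : x ∈ C) (hy : y ∈ C ∪ B)
    (hxy : x ≠ y) : G.Adj x y :=
  adj_of_neighborFinset_subset_erase (neighborFinset_subset_of_mem_right hunion hac hx) hcard
    (mem_union_left _ hx) hy hxy

end

theorem card_parts_of_degree_bounds {a b c δ : ℕ} (hδ : Even δ)
    (hlow : 2 * (a + b + c) ≤ 3 * δ + 3) (ha : δ < a + b) (hb : δ ≤ a + c) (hc : δ < b + c) :
    (a + b + c) % 3 = 1 ∧
      ∀ N, a + b + c = 3 * N + 1 → a = N ∧ c = N ∧ b = N + 1 ∧ δ = 2 * N := by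
  obtain ⟨k, rfl⟩ := hδ
  exact ⟨by omega, fun N hN => by omega⟩

/-- Let `G` be a graph on `n` vertices with minimum degree at least `2n/3 - 1` in which
every vertex has even degree, and suppose the vertex set is partitioned into nonempty
sets `A`, `B`, `C` with `e(A,C) = e(B) = 0`. Then `n ≡ 1 (mod 3)`, and writing
`n = 3N+1`: `|A| = |C| = N`, `|B| = N+1`, the graphs `G[A]`, `G[C]` and `G[B, A ∪ C]`
are complete, and `G` is `2N`-regular. -/
theorem stmt_8 (G : SimpleGraph V) [DecidableRel G.Adj]
    (hδ : (G.minDegree : ℝ) ≥ 2 * (Fintype.card V : ℝ) / 3 - 1)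
    (heven : ∀ v : V, Even (G.degree v))
    (A B C : Finset V) (hA : A.Nonempty) (hB : B.Nonempty) (hC : C.Nonempty)
    (hAB : Disjoint A B) (hAC : Disjoint A C) (hBC : Disjoint B C)
    (hunion : A ∪ B ∪ C = Finset.univ)
    (hac : crossEdges G A C = ∅) (hb : innerEdges G B = ∅) :
    Fintype.card V % 3 = 1 ∧
      ∀ N : ℕ, Fintype.card V = 3 * N + 1 →
        A.card = N ∧ C.card = N ∧ B.card = N + 1 ∧
        (∀ x ∈ A, ∀ y ∈ A, x ≠ y → G.Adj x y) ∧
        (∀ x ∈ C, ∀ y ∈ C, x ≠ y → G.Adj x y) ∧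
        (∀ x ∈ B, ∀ y ∈ A ∪ C, G.Adj x y) ∧
        (∀ v : V, G.degree v = 2 * N) := by
  have hn : A.card + B.card + C.card = Fintype.card V := by
    rw [← card_union_of_disjoint hAB, ← card_union_of_disjoint (disjoint_union_left.2 ⟨hAC, hBC⟩),
      hunion, card_univ]
  have hlow : 2 * Fintype.card V ≤ 3 * G.minDegree + 3 := by
    exact_mod_cast (by linarith : (2 * Fintype.card V : ℝ) ≤ 3 * G.minDegree + 3)
  obtain ⟨u, hu⟩ := hA
  obtain ⟨v, hv⟩ := hB
  obtain ⟨w, hw⟩ := hC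
  obtain ⟨hmod, hsize⟩ := card_parts_of_degree_bounds (even_minDegree heven) (hn ▸ hlow)
    ((G.minDegree_le_degree u).trans_lt (degree_lt_of_mem_left hunion hAB hac hu))
    ((G.minDegree_le_degree v).trans (degree_le_of_mem_middle hunion hAC hb hv))
    ((G.minDegree_le_degree w).trans_lt (degree_lt_of_mem_right hunion hBC hac hw))
  refine ⟨hn ▸ hmod, fun N hN => ?_⟩
  obtain ⟨hAN, hCN, hBN, hδN⟩ := hsize N (hn ▸ hN)
  have hAB_card : (A ∪ B).card ≤ G.minDegree + 1 := by rw [card_union_of_disjoint hAB]; omega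
  have hCB_card : (C ∪ B).card ≤ G.minDegree + 1 := by rw [card_union_of_disjoint hBC.symm]; omega
  refine ⟨hAN, hCN, hBN, fun x hx y hy => adj_of_mem_left hunion hac hAB_card hx (mem_union_left _ hy),
    fun x hx y hy => adj_of_mem_right hunion hac hCB_card hx (mem_union_left _ hy),
    fun x hx y hy => ?_, fun z => le_antisymm ?_ (hδN ▸ G.minDegree_le_degree z)⟩
  · rcases mem_union.1 hy with hy | hy
    · exact (adj_of_mem_left hunion hac hAB_card hy (mem_union_right _ hx)
        (disjoint_iff_ne.1 hAB y hy x hx)).symm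
    · exact (adj_of_mem_right hunion hac hCB_card hy (mem_union_right _ hx)
        (disjoint_iff_ne.1 hBC x hx y hy).symm).symm
  · have hz : z ∈ A ∪ B ∪ C := hunion ▸ mem_univ z
    rcases mem_union.1 hz with hz | hz
    · rcases mem_union.1 hz with hz | hz
      · have := degree_lt_of_mem_left hunion hAB hac hz; omega
      · have := degree_le_of_mem_middle hunion hAC hb hz; omega
    · have := degree_lt_of_mem_right hunion hBC hac hz; omega
end

section
/- Let G be a graph on n vertices, let 0 < ν ≤ 1, and suppose G is a ν-expander. If H is a subgraph of G with maximum degree Δ(H) ≤ ν n / 4, then G − H is a (ν/2)-expander. -/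
/-! If `v` has at least `νn` common neighbours with `x` in `G`, deleting the edges of `H` destroys
at most `Δ(H)` of them at `v` and at most `Δ(H)` at `x`, so at least `νn - 2Δ(H) ≥ νn/2` remain.
Hence `R_{ν,G}(N_G(x)) ⊆ R_{ν/2,G-H}(N_{G-H}(x))`, and `n/2 + νn ≥ n/2 + (ν/2)n`. -/

variable {V : Type*} [Fintype V]

/-- The robust neighbourhood `R_{ν,G}(S)`: vertices with at least `νn` neighbours in `S`. -/
def robustNbhd (G : SimpleGraph V) (ν : ℝ) (S : Set V) : Set V :=
  {v | ν * (Fintype.card V : ℝ) ≤ ((G.neighborSet v ∩ S).ncard : ℝ)}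

/-- A set `S` is `ν`-expanding in `G` if `|R_{ν,G}(S)| ≥ n/2 + νn`. -/
def IsExpanding (G : SimpleGraph V) (ν : ℝ) (S : Set V) : Prop :=
  (Fintype.card V : ℝ) / 2 + ν * (Fintype.card V : ℝ) ≤ ((robustNbhd G ν S).ncard : ℝ)

/-- `G` is a `ν`-expander if the neighbourhood of every vertex is `ν`-expanding. -/
def IsExpander (G : SimpleGraph V) (ν : ℝ) : Prop :=
  ∀ x : V, IsExpanding G ν (G.neighborSet x)

namespace SimpleGraph

theorem ncard_neighborSet_inter_le_sdiff_add {W : Type*} [Finite W] (G H : SimpleGraph W)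
    (v x : W) :
    (G.neighborSet v ∩ G.neighborSet x).ncard ≤
      ((G \ H).neighborSet v ∩ (G \ H).neighborSet x).ncard +
        ((H.neighborSet v).ncard + (H.neighborSet x).ncard) := by
  have hsub : (G.neighborSet v ∩ G.neighborSet x) \ (H.neighborSet v ∪ H.neighborSet x) ⊆
      (G \ H).neighborSet v ∩ (G \ H).neighborSet x := by
    rintro u ⟨⟨hGv, hGx⟩, hH⟩
    simp only [Set.mem_union, not_or, mem_neighborSet] at hH
    exact ⟨⟨hGv, hH.1⟩, hGx, hH.2⟩
  calc (G.neighborSet v ∩ G.neighborSet x).ncard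
      ≤ ((G.neighborSet v ∩ G.neighborSet x) \ (H.neighborSet v ∪ H.neighborSet x)).ncard +
          (H.neighborSet v ∪ H.neighborSet x).ncard :=
        Set.ncard_le_ncard_sdiff_add_ncard _ _
    _ ≤ _ := add_le_add (Set.ncard_le_ncard hsub) (Set.ncard_union_le _ _)

end SimpleGraph

theorem robustNbhd_neighborSet_subset_sdiff {G H : SimpleGraph V} {ν μ δ : ℝ}
    (hΔ : ∀ v : V, ((H.neighborSet v).ncard : ℝ) ≤ δ)
    (hμ : μ * Fintype.card V + 2 * δ ≤ ν * Fintype.card V) (x : V) :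
    robustNbhd G ν (G.neighborSet x) ⊆ robustNbhd (G \ H) μ ((G \ H).neighborSet x) := by
  intro v hv
  have hcommon : ((G.neighborSet v ∩ G.neighborSet x).ncard : ℝ) ≤
      (((G \ H).neighborSet v ∩ (G \ H).neighborSet x).ncard : ℝ) +
        (((H.neighborSet v).ncard : ℝ) + (H.neighborSet x).ncard) := by
    exact_mod_cast G.ncard_neighborSet_inter_le_sdiff_add H v x
  simp only [robustNbhd, Set.mem_ofPred_eq] at hv ⊢
  linarith [hΔ v, hΔ x]

theorem IsExpanding.of_robustNbhd_subset {G G' : SimpleGraph V} {ν μ : ℝ} {S S' : Set V}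
    (h : IsExpanding G ν S) (hμν : μ ≤ ν) (hR : robustNbhd G ν S ⊆ robustNbhd G' μ S') :
    IsExpanding G' μ S' := by
  have hcard : ((robustNbhd G ν S).ncard : ℝ) ≤ (robustNbhd G' μ S').ncard := by
    exact_mod_cast Set.ncard_le_ncard hR
  have hscale : μ * Fintype.card V ≤ ν * Fintype.card V :=
    mul_le_mul_of_nonneg_right hμν (Nat.cast_nonneg _)
  unfold IsExpanding at h ⊢
  linarith

theorem stmt_11_general (G H : SimpleGraph V) (ν : ℝ) (hν0 : 0 < ν)
    (hexp : IsExpander G ν)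
    (hΔ : ∀ v : V, ((H.neighborSet v).ncard : ℝ) ≤ ν * (Fintype.card V : ℝ) / 4) :
    IsExpander (G \ H) (ν / 2) := fun x =>
  (hexp x).of_robustNbhd_subset (by linarith)
    (robustNbhd_neighborSet_subset_sdiff hΔ (by linarith) x)

/-- If `G` is a `ν`-expander on `n` vertices and `H` is a subgraph of `G` with maximum
degree at most `νn/4`, then `G - H` is a `(ν/2)`-expander. -/
theorem stmt_11 (G H : SimpleGraph V) (ν : ℝ) (hν0 : 0 < ν) (hν1 : ν ≤ 1)
    (hexp : IsExpander G ν) (hHG : H ≤ G)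
    (hΔ : ∀ v : V, ((H.neighborSet v).ncard : ℝ) ≤ ν * (Fintype.card V : ℝ) / 4) :
    IsExpander (G \ H) (ν / 2) :=
  stmt_11_general G H ν hν0 hexp hΔ
end

section
/- Let m ≥ 1 and let G be the graph obtained from the blow-up of the 6-cycle with parts V_1,…,V_6 each of size 2m+1 (complete bipartite graphs between consecutive parts, indices mod 6) by deleting the edges of one 6-cycle that alternates between V_5 and V_6. Then G is bipartite with parts A = V_1∪V_3∪V_5 and B = V_2∪V_4∪V_6 of size 6m+3 each, every vertex has even degree, 4 divides e(G) = 24m(m+1), δ(G) = 4m, and G has no C_4-decomposition. -/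
/-- The removed `6`-cycle alternating between the fifth and sixth parts: `P a b` says the
edge from the `a`-th vertex of `V₅` to the `b`-th vertex of `V₆` is removed. -/
def remPair {m : ℕ} (a b : Fin (2 * m + 1)) : Prop :=
  a.val < 3 ∧ b.val < 3 ∧ (a.val = b.val ∨ a.val = (b.val + 1) % 3)

/-!
Project `G` onto the hexagon `cycleGraph 6` by `Prod.fst`. A closed walk of length `4` on the
hexagon cannot wind around it, so it traverses the edge `{0, 1}` an even number of times; hence
every `4`-cycle of `G` uses an even number of edges between `V₁` and `V₂`. In a `C₄`-decomposition
these edges would therefore be even in number, but `V₁` and `V₂` are completely joined, giving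
`(2m+1)²` of them. The remaining claims follow from the degree formula: a vertex has degree
`4m` if it lies on the removed hexagon and `4m + 2` otherwise.
-/

open Finset

namespace SimpleGraph

lemma Walk.exists_edges_eq_of_length_eq_four {V : Type*} {G : SimpleGraph V} {v : V}
    (p : G.Walk v v) (h : p.length = 4) :
    ∃ a b c : V, G.Adj v a ∧ G.Adj a b ∧ G.Adj b c ∧ G.Adj c v ∧
      p.edges = [s(v, a), s(a, b), s(b, c), s(c, v)] := by
  match p with
  | .cons h₁ (.cons h₂ (.cons h₃ (.cons h₄ .nil))) => exact ⟨_, _, _, h₁, h₂, h₃, h₄, rfl⟩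

lemma cycleGraph_six_even_countP_edges_of_length_eq_four {v : Fin 6}
    (p : (cycleGraph 6).Walk v v) (h : p.length = 4) :
    Even (p.edges.countP (· = s(0, 1))) := by
  obtain ⟨a, b, c, h₁, h₂, h₃, h₄, hp⟩ := p.exists_edges_eq_of_length_eq_four h
  rw [hp]
  clear p h hp
  revert v a b c
  decide

lemma cycleGraph_adj_val_mod_two_ne {n : ℕ} (hn : Even n) {i j : Fin n}
    (h : (cycleGraph n).Adj i j) : i.val % 2 ≠ j.val % 2 := by
  have : decide (i.val % 2 = 0) ≠ decide (j.val % 2 = 0) :=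
    (cycleGraph.bicoloring_of_even n hn).valid h
  rw [ne_eq, decide_eq_decide] at this
  omega

theorem HasCycleDecomp.even_card_filter {V : Type*} {G : SimpleGraph V} [Fintype G.edgeSet]
    [DecidableEq V] {k : ℕ} (hG : G.HasCycleDecomp k) (F : Sym2 V → Prop) [DecidablePred F]
    (hF : ∀ v (c : G.Walk v v), c.IsCycle → c.length = k → Even (c.edges.countP F)) :
    Even #(G.edgeFinset.filter F) := by
  obtain ⟨l, hcyc, hdisj, hcover⟩ := hG
  set L := l.flatMap fun c => c.2.edges
  have hL : L.Nodup := List.nodup_flatMap.2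
    ⟨fun c hc => (hcyc c hc).1.isCircuit.isTrail.edges_nodup, hdisj⟩
  have hE : G.edgeFinset = L.toFinset := by ext e; simp [L, hcover]
  rw [hE, List.filter_toFinset, List.toFinset_card_of_nodup (hL.filter _),
    ← List.countP_eq_length_filter, List.countP_flatMap, even_iff_two_dvd]
  refine List.dvd_sum fun n hn => ?_
  obtain ⟨c, hc, rfl⟩ := List.mem_map.1 hn
  exact even_iff_two_dvd.1 (hF _ _ (hcyc c hc).1 (hcyc c hc).2)

end SimpleGraph

open SimpleGraph

instance {m : ℕ} (a b : Fin (2 * m + 1)) : Decidable (remPair a b) := by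
  unfold remPair; infer_instance

lemma card_filter_remPair_left {m : ℕ} (hm : 1 ≤ m) (a : Fin (2 * m + 1)) :
    #{b | remPair a b} = if a.val < 3 then 2 else 0 := by
  split_ifs with ha
  · have : ({b | remPair a b} : Finset _) = {a, ⟨(a.val + 2) % 3, by omega⟩} := by
      ext b
      simp only [mem_filter, mem_univ, true_and, mem_insert, mem_singleton, Fin.ext_iff]
      unfold remPair; omega
    rw [this, card_pair (by simp only [ne_eq, Fin.ext_iff]; omega)]
  · exact card_eq_zero.2 (filter_eq_empty_iff.2 fun b _ ⟨h, _⟩ => ha h)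

lemma card_filter_remPair_right {m : ℕ} (hm : 1 ≤ m) (b : Fin (2 * m + 1)) :
    #{a | remPair a b} = if b.val < 3 then 2 else 0 := by
  split_ifs with hb
  · have : ({a | remPair a b} : Finset _) = {b, ⟨(b.val + 1) % 3, by omega⟩} := by
      ext a
      simp only [mem_filter, mem_univ, true_and, mem_insert, mem_singleton, Fin.ext_iff]
      unfold remPair; omega
    rw [this, card_pair (by simp only [ne_eq, Fin.ext_iff]; omega)]
  · exact card_eq_zero.2 (filter_eq_empty_iff.2 fun a _ ⟨_, h, _⟩ => hb h)

def IsC6BlowupMinusC6 {m : ℕ} (G : SimpleGraph (Fin 6 × Fin (2 * m + 1))) : Prop :=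
  ∀ x y : Fin 6 × Fin (2 * m + 1), G.Adj x y ↔
    ((y.1 = x.1 + 1 ∨ x.1 = y.1 + 1) ∧
      ¬ ((x.1 = 4 ∧ y.1 = 5 ∧ remPair x.2 y.2) ∨ (x.1 = 5 ∧ y.1 = 4 ∧ remPair y.2 x.2)))

def removedHexagon (m : ℕ) : Finset (Fin 6 × Fin (2 * m + 1)) :=
  ({4, 5} : Finset (Fin 6)) ×ˢ ({a | a.val < 3} : Finset (Fin (2 * m + 1)))

lemma card_removedHexagon {m : ℕ} (hm : 1 ≤ m) : #(removedHexagon m) = 6 := by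
  rw [removedHexagon, card_product, card_pair (by decide), Fin.card_filter_val_lt]
  omega

namespace IsC6BlowupMinusC6

variable {m : ℕ} {G : SimpleGraph (Fin 6 × Fin (2 * m + 1))}

lemma fst_adj (hG : IsC6BlowupMinusC6 G) {x y : Fin 6 × Fin (2 * m + 1)} (h : G.Adj x y) :
    (cycleGraph 6).Adj x.1 y.1 := by
  have := ((hG x y).1 h).1
  revert this
  generalize x.1 = i, y.1 = j
  revert i j
  decide

def toCycleGraph (hG : IsC6BlowupMinusC6 G) : G →g cycleGraph 6 := ⟨Prod.fst, hG.fst_adj⟩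

lemma degree_eq (hm : 1 ≤ m) (hG : IsC6BlowupMinusC6 G) [DecidableRel G.Adj]
    (v : Fin 6 × Fin (2 * m + 1)) :
    G.degree v = if v ∈ removedHexagon m then 4 * m else 4 * m + 2 := by
  obtain ⟨i, a⟩ := v
  rw [← card_neighborFinset_eq_degree, neighborFinset_eq_filter, card_filter,
    Fintype.sum_prod_type, Fin.sum_univ_six]
  simp only [← card_filter]
  have hl := card_filter_remPair_left hm a
  have hr := card_filter_remPair_right hm a
  unfold IsC6BlowupMinusC6 at hG
  fin_cases i <;> simp [hG, removedHexagon, filter_not, card_sdiff_of_subset, hl, hr] <;>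
    (try split_ifs) <;> omega

lemma card_edgeFinset (hm : 1 ≤ m) (hG : IsC6BlowupMinusC6 G) [DecidableRel G.Adj] :
    #G.edgeFinset = 24 * m * (m + 1) := by
  have hsum := G.sum_degrees_eq_twice_card_edges
  simp only [hG.degree_eq hm, sum_ite, sum_const, smul_eq_mul, filter_mem_eq_inter, univ_inter,
    filter_not, card_sdiff_of_subset (subset_univ _), card_removedHexagon hm, card_univ,
    Fintype.card_prod, Fintype.card_fin] at hsum
  rw [show 6 * (2 * m + 1) - 6 = 12 * m by omega] at hsum
  linarith

lemma minDegree_eq (hm : 1 ≤ m) (hG : IsC6BlowupMinusC6 G) [DecidableRel G.Adj] :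
    G.minDegree = 4 * m := by
  have hv : ((4 : Fin 6), (⟨0, by omega⟩ : Fin (2 * m + 1))) ∈ removedHexagon m := by
    simp [removedHexagon]
  refine le_antisymm ?_ (le_minDegree_of_forall_le_degree _ _ fun v => ?_)
  · have := G.minDegree_le_degree (4, ⟨0, by omega⟩)
    rwa [hG.degree_eq hm, if_pos hv] at this
  · rw [hG.degree_eq hm]; split_ifs <;> omega

lemma card_edgeFinset_filter_map_fst_eq (hG : IsC6BlowupMinusC6 G) [DecidableRel G.Adj] :
    #(G.edgeFinset.filter fun e => e.map Prod.fst = s(0, 1)) = (2 * m + 1) ^ 2 := by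
  have : (G.edgeFinset.filter fun e => e.map Prod.fst = s(0, 1)) =
      (univ : Finset (Fin (2 * m + 1) × Fin (2 * m + 1))).image
        fun ab => s((0, ab.1), (1, ab.2)) := by
    ext e
    induction e using Sym2.ind with
    | _ x y =>
      rcases x with ⟨i, a⟩; rcases y with ⟨j, b⟩
      simp only [mem_filter, mem_edgeFinset, mem_edgeSet, hG _ _, Sym2.map_mk, Sym2.eq_iff,
        mem_image, mem_univ, true_and, Prod.exists, Prod.mk.injEq]
      grind
  rw [this, card_image_of_injective, card_univ, Fintype.card_prod, Fintype.card_fin, sq]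
  rintro ⟨a, b⟩ ⟨a', b'⟩ h
  simpa using h

lemma even_countP_edges_map_fst_of_length_eq_four (hG : IsC6BlowupMinusC6 G)
    {v : Fin 6 × Fin (2 * m + 1)} (c : G.Walk v v) (hc : c.length = 4) :
    Even (c.edges.countP fun e => e.map Prod.fst = s(0, 1)) := by
  have := cycleGraph_six_even_countP_edges_of_length_eq_four (c.map hG.toCycleGraph) (by simpa)
  rwa [Walk.edges_map, List.countP_map] at this

lemma not_hasCycleDecomp_four (hG : IsC6BlowupMinusC6 G) : ¬ G.HasCycleDecomp 4 := by
  classical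
  intro hD
  have := hD.even_card_filter _ fun v c _ hc =>
    hG.even_countP_edges_map_fst_of_length_eq_four c hc
  rw [hG.card_edgeFinset_filter_map_fst_eq] at this
  exact Nat.not_even_iff_odd.2 (Odd.pow (odd_two_mul_add_one m)) this

end IsC6BlowupMinusC6

/-- Let `m ≥ 1` and let `G` be the blow-up of the `6`-cycle, with parts
`V_1, …, V_6` of size `2m+1` (part `i` being `{i} × Fin (2m+1)`, consecutive parts
completely joined, indices mod 6), minus one `6`-cycle alternating between `V_5` and
`V_6`. Then `G` is bipartite with parts `A = V_1 ∪ V_3 ∪ V_5` and `B = V_2 ∪ V_4 ∪ V_6`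
of size `6m+3`, every vertex has even degree, `e(G) = 24m(m+1)` is divisible by `4`,
`δ(G) = 4m`, but `G` has no `C₄`-decomposition. -/
theorem stmt_15 (m : ℕ) (hm : 1 ≤ m)
    (G : SimpleGraph (Fin 6 × Fin (2 * m + 1))) [DecidableRel G.Adj]
    (hadj : ∀ x y : Fin 6 × Fin (2 * m + 1), G.Adj x y ↔
      ((y.1 = x.1 + 1 ∨ x.1 = y.1 + 1) ∧
        ¬ ((x.1 = 4 ∧ y.1 = 5 ∧ remPair x.2 y.2) ∨
           (x.1 = 5 ∧ y.1 = 4 ∧ remPair y.2 x.2)))) :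
    (∀ x y, G.Adj x y → x.1.val % 2 ≠ y.1.val % 2) ∧
      (Finset.univ.filter fun v : Fin 6 × Fin (2 * m + 1) => v.1.val % 2 = 0).card
        = 6 * m + 3 ∧
      (Finset.univ.filter fun v : Fin 6 × Fin (2 * m + 1) => v.1.val % 2 = 1).card
        = 6 * m + 3 ∧
      (∀ v, Even (G.degree v)) ∧
      G.edgeFinset.card = 24 * m * (m + 1) ∧ 4 ∣ G.edgeFinset.card ∧
      G.minDegree = 4 * m ∧
      ¬ G.HasCycleDecomp 4 := by
  have hG : IsC6BlowupMinusC6 G := hadj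
  have hE := hG.card_edgeFinset hm
  have hparts (r : ℕ) : #{v : Fin 6 × Fin (2 * m + 1) | v.1.val % 2 = r} =
      #{i : Fin 6 | i.val % 2 = r} * (2 * m + 1) := by
    rw [← univ_product_univ, filter_product_left fun i : Fin 6 => i.val % 2 = r, card_product, card_univ, Fintype.card_fin]
  refine ⟨fun x y h => cycleGraph_adj_val_mod_two_ne (by decide) (hG.fst_adj h), ?_, ?_,
    fun v => ?_, hE, ⟨6 * m * (m + 1), by rw [hE]; ring⟩, hG.minDegree_eq hm,
    hG.not_hasCycleDecomp_four⟩
  · rw [hparts, show #{i : Fin 6 | i.val % 2 = 0} = 3 by decide]; ring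
  · rw [hparts, show #{i : Fin 6 | i.val % 2 = 1} = 3 by decide]; ring
  · rw [hG.degree_eq hm, Nat.even_iff]; split_ifs <;> omega
end

section
/- Let k ≥ 3 be odd and choose m with 4m ≡ k−1 (mod 2k). Let G be the disjoint union of K_{2m+1,2m+1} minus a perfect matching and K_{2m,2m}. Then G is a balanced bipartite graph with parts of size 4m+1, every vertex has even degree 2m, 2k divides e(G) = 2m(4m+1), but G has no C_{2k}-decomposition. -/
open Finset

namespace SimpleGraph

variable {V : Type*} {G : SimpleGraph V}

theorem Walk.mem_iff_of_mem_support {S : Set V} (hS : ∀ ⦃x y⦄, G.Adj x y → x ∈ S → y ∈ S)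
    {u v w : V} (p : G.Walk u v) (hw : w ∈ p.support) : u ∈ S ↔ w ∈ S := by
  induction p with
  | nil => rw [support_nil, List.mem_singleton] at hw; rw [hw]
  | cons h p ih =>
    rcases List.mem_cons.1 hw with rfl | hw
    · rfl
    · exact ⟨fun hu => (ih hw).1 (hS h hu), fun hw' => hS h.symm ((ih hw).2 hw')⟩

variable [Fintype V] [DecidableEq V] [DecidableRel G.Adj]

theorem sum_degree_eq_two_mul_card_edgeFinset_inter_sym2 {S : Finset V}
    (hS : ∀ ⦃x y⦄, G.Adj x y → x ∈ S → y ∈ S) :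
    ∑ v ∈ S, G.degree v = 2 * #(G.edgeFinset ∩ S.sym2) := by
  have hfst : #{d : G.Dart | d.fst ∈ S} = ∑ v ∈ S, G.degree v := by
    rw [card_eq_sum_card_fiberwise (s := {d : G.Dart | d.fst ∈ S}) (t := S)
      fun d hd => (mem_filter.1 hd).2]
    refine sum_congr rfl fun v hv => ?_
    rw [filter_filter, ← dart_fst_fiber_card_eq_degree]
    congr 1
    ext d
    simp only [mem_filter, mem_univ, true_and, and_iff_right_iff_imp]
    rintro rfl
    exact hv
  have hedge : #{d : G.Dart | d.fst ∈ S} = 2 * #(G.edgeFinset ∩ S.sym2) := by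
    rw [card_eq_sum_card_fiberwise (s := {d : G.Dart | d.fst ∈ S}) (f := Dart.edge)
      (t := G.edgeFinset ∩ S.sym2) ?_, mul_comm, ← smul_eq_mul, ← sum_const]
    · refine sum_congr rfl fun e he => ?_
      rw [← G.dart_edge_fiber_card e (mem_edgeFinset.1 (mem_inter.1 he).1), filter_filter]
      congr 1
      ext d
      simp only [mem_filter, mem_univ, true_and, and_iff_right_iff_imp]
      rintro rfl
      exact mem_sym2_iff.1 (mem_inter.1 he).2 _ (Sym2.mem_mk_left _ _)
    · intro d hd
      have hd : d.fst ∈ S := (mem_filter.1 hd).2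
      rw [coe_inter, Set.mem_inter_iff, coe_edgeFinset, mem_coe, Dart.edge, mk_mem_sym2_iff]
      exact ⟨d.edge_mem, hd, hS d.adj hd⟩
  rw [← hfst, hedge]

theorem HasCycleDecomp.dvd_card_edgeFinset_inter_sym2 {n : ℕ} (h : G.HasCycleDecomp n)
    {S : Finset V} (hS : ∀ ⦃x y⦄, G.Adj x y → x ∈ S → y ∈ S) :
    n ∣ #(G.edgeFinset ∩ S.sym2) := by
  obtain ⟨l, hcyc, hpair, hcov⟩ := h
  have hS' : ∀ ⦃x y⦄, G.Adj x y → x ∈ (S : Set V) → y ∈ (S : Set V) := hS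
  have hunion : G.edgeFinset ∩ S.sym2
      = (univ.filter fun i : Fin l.length => l[i].1 ∈ S).biUnion
          fun i => l[i].2.edges.toFinset := by
    ext e
    simp only [mem_inter, mem_edgeFinset, mem_biUnion, mem_filter, mem_univ, true_and,
      List.mem_toFinset]
    induction e using Sym2.ind with | _ x y => ?_
    constructor
    · rintro ⟨he, hxy⟩
      obtain ⟨p, hp, hep⟩ := (hcov _).1 he
      obtain ⟨i, rfl⟩ := List.mem_iff_get.1 hp
      exact ⟨i, (Walk.mem_iff_of_mem_support hS' _ (Walk.fst_mem_support_of_mem_edges _ hep)).2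
        (mk_mem_sym2_iff.1 hxy).1, hep⟩
    · rintro ⟨i, hi, hxy⟩
      exact ⟨Walk.edges_subset_edgeSet _ hxy, mk_mem_sym2_iff.2
        ⟨(Walk.mem_iff_of_mem_support hS' _ (Walk.fst_mem_support_of_mem_edges _ hxy)).1 hi,
          (Walk.mem_iff_of_mem_support hS' _ (Walk.snd_mem_support_of_mem_edges _ hxy)).1 hi⟩⟩
  have hdisj : (univ.filter fun i : Fin l.length => l[i].1 ∈ S : Set (Fin l.length))
      |>.PairwiseDisjoint fun i => l[i].2.edges.toFinset := by
    intro i _ j _ hij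
    rw [Function.onFun, List.disjoint_toFinset_iff_disjoint]
    rcases Fin.lt_or_lt_of_ne hij with hlt | hlt
    · exact List.pairwise_iff_getElem.1 hpair i j i.2 j.2 hlt
    · exact (List.pairwise_iff_getElem.1 hpair j i j.2 i.2 hlt).symm
  rw [hunion, card_biUnion hdisj]
  refine dvd_sum fun i _ => ?_
  obtain ⟨hcycle, hlength⟩ := hcyc l[i] (List.getElem_mem _)
  rw [List.toFinset_card_of_nodup hcycle.edges_nodup, Walk.length_edges, hlength]

end SimpleGraph

theorem Nat.two_mul_dvd_two_mul_mul_four_mul_add_one {k m : ℕ} (hk : 0 < k)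
    (hm : 4 * m ≡ k - 1 [MOD 2 * k]) : 2 * k ∣ 2 * m * (4 * m + 1) := by
  have h := hm.add_right 1
  rw [Nat.sub_add_cancel hk] at h
  exact mul_dvd_mul (dvd_mul_right 2 m) ((h.dvd_iff (dvd_mul_left k 2)).2 dvd_rfl)

theorem Nat.not_two_mul_dvd_two_mul {k m : ℕ} (hk : 2 ≤ k) (hm : 4 * m ≡ k - 1 [MOD 2 * k]) :
    ¬ 2 * k ∣ 2 * m := by
  intro h
  have h4m : 2 * k ∣ 4 * m := by
    rw [show 4 * m = 2 * (2 * m) by ring]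
    exact dvd_mul_of_dvd_right h 2
  have := Nat.le_of_dvd (by omega) ((hm.dvd_iff dvd_rfl).1 h4m)
  omega

theorem Finset.card_filter_isRight {α β : Type*} [Fintype α] [Fintype β] :
    #{v : α ⊕ β | v.isRight} = Fintype.card β := by
  rw [card_eq_sum_ones, sum_filter, Fintype.sum_sum_type]
  simp

namespace Counterexample

variable {m : ℕ}
    {G : SimpleGraph ((Fin (2 * m + 1) ⊕ Fin (2 * m + 1)) ⊕ (Fin (2 * m) ⊕ Fin (2 * m)))}
    (hadj : ∀ x y, G.Adj x y ↔
      ((∃ a b, a ≠ b ∧ ((x = Sum.inl (Sum.inl a) ∧ y = Sum.inl (Sum.inr b)) ∨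
                        (x = Sum.inl (Sum.inr a) ∧ y = Sum.inl (Sum.inl b)))) ∨
       (∃ a b, (x = Sum.inr (Sum.inl a) ∧ y = Sum.inr (Sum.inr b)) ∨
               (x = Sum.inr (Sum.inr a) ∧ y = Sum.inr (Sum.inl b)))))
include hadj

theorem degree_eq [DecidableRel G.Adj] (v) : G.degree v = 2 * m := by
  classical
  rw [← G.card_neighborFinset_eq_degree, G.neighborFinset_eq_filter, card_eq_sum_ones, sum_filter]
  rcases v with (a | a) | (a | a) <;> simp only [Fintype.sum_sum_type, hadj] <;>
    simp [eq_comm (a := a), sum_ite, ← ne_eq, filter_ne']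

theorem elim_isLeft_ne_of_adj {x y} (h : G.Adj x y) :
    Sum.elim Sum.isLeft Sum.isLeft x ≠ Sum.elim Sum.isLeft Sum.isLeft y := by
  rw [hadj] at h
  rcases h with ⟨a, b, -, ⟨rfl, rfl⟩ | ⟨rfl, rfl⟩⟩ | ⟨a, b, ⟨rfl, rfl⟩ | ⟨rfl, rfl⟩⟩ <;> simp

theorem mem_filter_isRight_of_adj :
    ∀ ⦃x y⦄, G.Adj x y → x ∈ ({v | v.isRight} : Finset _) → y ∈ ({v | v.isRight} : Finset _) := by
  intro x y h
  rw [hadj] at h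
  rcases h with ⟨a, b, -, ⟨rfl, rfl⟩ | ⟨rfl, rfl⟩⟩ | ⟨a, b, ⟨rfl, rfl⟩ | ⟨rfl, rfl⟩⟩ <;> simp_all

theorem card_edgeFinset [DecidableRel G.Adj] : #G.edgeFinset = 2 * m * (4 * m + 1) := by
  have := G.sum_degrees_eq_twice_card_edges
  simp only [degree_eq hadj, sum_const, card_univ, Fintype.card_sum, Fintype.card_fin,
    smul_eq_mul] at this
  linarith

theorem card_edgeFinset_inter_sym2_isRight [DecidableRel G.Adj] :
    #(G.edgeFinset ∩ ({v | v.isRight} : Finset _).sym2) = 2 * m * (2 * m) := by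
  have := G.sum_degree_eq_two_mul_card_edgeFinset_inter_sym2 (mem_filter_isRight_of_adj hadj)
  simp only [degree_eq hadj, sum_const, card_filter_isRight, Fintype.card_sum, Fintype.card_fin,
    smul_eq_mul] at this
  linarith

end Counterexample

theorem stmt_16_general (k m : ℕ) (hk : 3 ≤ k)
    (hm : 4 * m ≡ k - 1 [MOD 2 * k])
    (G : SimpleGraph ((Fin (2 * m + 1) ⊕ Fin (2 * m + 1)) ⊕ (Fin (2 * m) ⊕ Fin (2 * m))))
    [DecidableRel G.Adj]
    (hadj : ∀ x y, G.Adj x y ↔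
      ((∃ a b, a ≠ b ∧ ((x = Sum.inl (Sum.inl a) ∧ y = Sum.inl (Sum.inr b)) ∨
                        (x = Sum.inl (Sum.inr a) ∧ y = Sum.inl (Sum.inl b)))) ∨
       (∃ a b, (x = Sum.inr (Sum.inl a) ∧ y = Sum.inr (Sum.inr b)) ∨
               (x = Sum.inr (Sum.inr a) ∧ y = Sum.inr (Sum.inl b))))) :
    (∃ c : (Fin (2 * m + 1) ⊕ Fin (2 * m + 1)) ⊕ (Fin (2 * m) ⊕ Fin (2 * m)) → Bool,
        (∀ x y, G.Adj x y → c x ≠ c y) ∧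
        (Finset.univ.filter fun v => c v = true).card = 4 * m + 1 ∧
        (Finset.univ.filter fun v => c v = false).card = 4 * m + 1) ∧
      (∀ v, G.degree v = 2 * m ∧ Even (G.degree v)) ∧
      (2 * k) ∣ G.edgeFinset.card ∧ G.edgeFinset.card = 2 * m * (4 * m + 1) ∧
      ¬ G.HasCycleDecomp (2 * k) := by
  have hcard := Counterexample.card_edgeFinset hadj
  have hdvd : 2 * k ∣ #G.edgeFinset := by
    rw [hcard]
    exact Nat.two_mul_dvd_two_mul_mul_four_mul_add_one (by omega) hm
  have hdeg := Counterexample.degree_eq hadj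
  refine ⟨⟨Sum.elim Sum.isLeft Sum.isLeft, fun x y => Counterexample.elim_isLeft_ne_of_adj hadj,
    ?_, ?_⟩, fun v => ⟨hdeg v, by rw [hdeg v]; exact even_two_mul m⟩, hdvd, hcard,
    fun hdecomp => ?_⟩
  · rw [card_eq_sum_ones, sum_filter, Fintype.sum_sum_type]; simp; ring
  · rw [card_eq_sum_ones, sum_filter, Fintype.sum_sum_type]; simp [card_filter_isRight]; ring
  have hright := Counterexample.card_edgeFinset_inter_sym2_isRight hadj ▸
    hdecomp.dvd_card_edgeFinset_inter_sym2 (Counterexample.mem_filter_isRight_of_adj hadj)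
  rw [hcard, show 2 * m * (4 * m + 1) = 2 * (2 * m * (2 * m)) + 2 * m by ring] at hdvd
  exact Nat.not_two_mul_dvd_two_mul (by omega) hm
    ((Nat.dvd_add_right (dvd_mul_of_dvd_right hright 2)).1 hdvd)

/-- Let `k ≥ 3` be odd and `4m ≡ k-1 (mod 2k)`. The disjoint union `G` of
`K_{2m+1,2m+1}` minus a perfect matching and `K_{2m,2m}` is a balanced bipartite graph
with parts of size `4m+1`, every vertex has even degree `2m`, `2k` divides
`e(G) = 2m(4m+1)`, but `G` has no `C_{2k}`-decomposition. -/
theorem stmt_16 (k m : ℕ) (hk : 3 ≤ k) (hko : Odd k)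
    (hm : 4 * m ≡ k - 1 [MOD 2 * k])
    (G : SimpleGraph ((Fin (2 * m + 1) ⊕ Fin (2 * m + 1)) ⊕ (Fin (2 * m) ⊕ Fin (2 * m))))
    [DecidableRel G.Adj]
    (hadj : ∀ x y, G.Adj x y ↔
      ((∃ a b, a ≠ b ∧ ((x = Sum.inl (Sum.inl a) ∧ y = Sum.inl (Sum.inr b)) ∨
                        (x = Sum.inl (Sum.inr a) ∧ y = Sum.inl (Sum.inl b)))) ∨
       (∃ a b, (x = Sum.inr (Sum.inl a) ∧ y = Sum.inr (Sum.inr b)) ∨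
               (x = Sum.inr (Sum.inr a) ∧ y = Sum.inr (Sum.inl b))))) :
    (∃ c : (Fin (2 * m + 1) ⊕ Fin (2 * m + 1)) ⊕ (Fin (2 * m) ⊕ Fin (2 * m)) → Bool,
        (∀ x y, G.Adj x y → c x ≠ c y) ∧
        (Finset.univ.filter fun v => c v = true).card = 4 * m + 1 ∧
        (Finset.univ.filter fun v => c v = false).card = 4 * m + 1) ∧
      (∀ v, G.degree v = 2 * m ∧ Even (G.degree v)) ∧
      (2 * k) ∣ G.edgeFinset.card ∧ G.edgeFinset.card = 2 * m * (4 * m + 1) ∧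
      ¬ G.HasCycleDecomp (2 * k) :=
  stmt_16_general k m hk hm G hadj
end

section
/- For every graph H without isolated vertices and every k ≥ 2, there exists a graph H^con on a vertex set extending V(H), edge-disjoint from H, such that H ∪ H^con is connected, H^con has a C_{2k}-decomposition, and |V(H ∪ H^con)| ≤ (2k−1)|V(H)|. -/
open Finset

namespace SimpleGraph

variable {V W : Type*} {G : SimpleGraph V}

theorem Walk.IsTrail.mem_edges_of_card_edgeFinset_le [Fintype G.edgeSet] {u v : V}
    {p : G.Walk u v} (hp : p.IsTrail) (hlen : #G.edgeFinset ≤ p.length) {e : Sym2 V}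
    (he : e ∈ G.edgeSet) : e ∈ p.edges := by
  classical
  have hfull : p.edges.toFinset = G.edgeFinset :=
    eq_of_subset_of_card_le
      (fun e h => mem_edgeFinset.2 (p.edges_subset_edgeSet (List.mem_toFinset.1 h)))
      (by rwa [List.toFinset_card_of_nodup hp.edges_nodup, Walk.length_edges])
  exact List.mem_toFinset.1 (hfull ▸ mem_edgeFinset.2 he)

theorem HasCycleDecomp.of_isCycle [Fintype G.edgeSet] {u : V} {p : G.Walk u u} (hp : p.IsCycle)
    (hlen : #G.edgeFinset ≤ p.length) : G.HasCycleDecomp p.length :=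
  ⟨[⟨u, p⟩], by simpa using hp, List.pairwise_singleton _ _,
    fun _ => ⟨fun he => ⟨_, List.mem_singleton_self _,
        hp.isTrail.mem_edges_of_card_edgeFinset_le hlen he⟩,
      fun ⟨q, hq, he⟩ => by
        obtain rfl := List.mem_singleton.1 hq
        exact p.edges_subset_edgeSet he⟩⟩

theorem card_edgeFinset_cycleGraph (n : ℕ) : #(cycleGraph (n + 3)).edgeFinset = n + 3 := by
  have := (cycleGraph (n + 3)).sum_degrees_eq_twice_card_edges
  simp only [cycleGraph_degree_three_le, sum_const, card_univ, Fintype.card_fin,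
    smul_eq_mul] at this
  omega

theorem hasCycleDecomp_cycleGraph {n : ℕ} (hn : 3 ≤ n) : (cycleGraph n).HasCycleDecomp n := by
  obtain ⟨m, rfl⟩ : ∃ m, n = m + 3 := ⟨n - 3, by omega⟩
  simpa only [cycleGraph.length_cycle] using
    HasCycleDecomp.of_isCycle cycleGraph.isCycle_cycle
      (by rw [card_edgeFinset_cycleGraph, cycleGraph.length_cycle])

theorem HasCycleDecomp.map {k : ℕ} (f : V ↪ W) (hG : G.HasCycleDecomp k) :
    (G.map f).HasCycleDecomp k := by
  obtain ⟨l, hcyc, hdisj, hcover⟩ := hG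
  let φ := Embedding.map f G
  refine ⟨l.map fun p => ⟨φ p.1, p.2.map φ.toHom⟩, ?_, ?_, ?_⟩
  · simp only [List.mem_map]
    rintro _ ⟨p, hp, rfl⟩
    exact ⟨(Walk.isCycle_map_iff_of_injective φ.injective).2 (hcyc p hp).1,
      (Walk.length_map _ _).trans (hcyc p hp).2⟩
  · refine List.pairwise_map.2 (hdisj.imp fun h => ?_)
    simp only [Walk.edges_map]
    exact List.disjoint_map (Sym2.map.injective φ.injective) h
  · intro e
    simp only [edgeSet_map, Set.mem_image, List.mem_map, exists_exists_and_eq_and, Walk.edges_map,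
      Function.Embedding.sym2Map_apply, hcover]
    constructor
    · rintro ⟨e, ⟨p, hp, he⟩, rfl⟩
      exact ⟨p, hp, e, he, rfl⟩
    · rintro ⟨p, hp, e, he, rfl⟩
      exact ⟨e, ⟨p, hp, he⟩, rfl⟩

theorem HasCycleDecomp.iSup {ι : Type*} [Finite ι] {k : ℕ} {G : ι → SimpleGraph V}
    (hdisj : Pairwise fun i j => Disjoint (G i).edgeSet (G j).edgeSet)
    (h : ∀ i, (G i).HasCycleDecomp k) : (⨆ i, G i).HasCycleDecomp k := by
  have := Fintype.ofFinite ι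
  choose l hcyc hpair hcover using h
  let lift (i : ι) (p : (v : V) × (G i).Walk v v) : (v : V) × (⨆ i, G i).Walk v v :=
    ⟨p.1, p.2.mapLe (le_iSup G i)⟩
  refine ⟨univ.toList.flatMap fun i => (l i).map (lift i), ?_, ?_, ?_⟩
  · simp only [List.mem_flatMap, List.mem_map]
    rintro _ ⟨i, -, p, hp, rfl⟩
    exact ⟨(hcyc i p hp).1.mapLe _, (Walk.length_mapLe _ _).trans (hcyc i p hp).2⟩
  · refine List.pairwise_flatMap.2
      ⟨fun i _ => List.pairwise_map.2 ((hpair i).imp fun h => ?_), ?_⟩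
    · simpa [lift, Walk.edges_mapLe_eq_edges] using h
    · refine (nodup_toList univ).imp fun {i j} hij => ?_
      simp only [List.mem_map]
      rintro _ ⟨p, -, rfl⟩ _ ⟨q, -, rfl⟩ e hp hq
      simp only [lift, Walk.edges_mapLe_eq_edges] at hp hq
      exact Set.disjoint_left.1 (hdisj hij) (p.2.edges_subset_edgeSet hp)
        (q.2.edges_subset_edgeSet hq)
  · intro e
    simp only [edgeSet_iSup, Set.mem_iUnion, hcover, List.mem_flatMap, mem_toList, mem_univ,
      true_and, List.mem_map]
    constructor
    · rintro ⟨i, p, hp, he⟩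
      exact ⟨_, ⟨i, p, hp, rfl⟩, by simpa [lift, Walk.edges_mapLe_eq_edges] using he⟩
    · rintro ⟨_, ⟨i, p, hp, rfl⟩, he⟩
      exact ⟨i, p, hp, by simpa [lift, Walk.edges_mapLe_eq_edges] using he⟩

end SimpleGraph

open SimpleGraph

namespace StarConnector

variable {V : Type*} {r : V} {k : ℕ}

variable (r k) in
abbrev Vertex : Type _ := V ⊕ ({v // v ≠ r} × Fin (2 * k - 2))

variable (r k) in
def cycleVertex (v : {v // v ≠ r}) (j : Fin (2 * k)) : Vertex r k :=
  if h₀ : j.val = 0 then .inl r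
  else if hₖ : j.val = k then .inl v
  else .inr (v, ⟨if j.val < k then j.val - 1 else j.val - 2, by
    have := j.isLt
    split_ifs <;> omega⟩)

theorem cycleVertex_injective (v : {v // v ≠ r}) : Function.Injective (cycleVertex r k v) := by
  intro i j hij
  grind [cycleVertex]

theorem cycleVertex_zero (v : {v // v ≠ r}) (hk : 0 < k) :
    cycleVertex r k v ⟨0, by omega⟩ = .inl r := rfl

theorem cycleVertex_k (v : {v // v ≠ r}) (hk : 0 < k) :
    cycleVertex r k v ⟨k, by omega⟩ = .inl v := by
  simp [cycleVertex, hk.ne']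

theorem eq_of_cycleVertex_eq_inr {v w : {v // v ≠ r}} {j : Fin (2 * k)} {d : Fin (2 * k - 2)}
    (h : cycleVertex r k v j = .inr (w, d)) : w = v := by
  simp only [cycleVertex] at h
  split_ifs at h <;> simp_all

theorem exists_cycleVertex_eq_inr (v : {v // v ≠ r}) (d : Fin (2 * k - 2)) :
    ∃ j, cycleVertex r k v j = .inr (v, d) := by
  rcases lt_or_ge d.val (k - 1) with hd | hd
  · exact ⟨⟨d + 1, by omega⟩, by grind [cycleVertex]⟩
  · exact ⟨⟨d + 2, by omega⟩, by grind [cycleVertex]⟩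

theorem cycleVertex_eq_inr {j : Fin (2 * k)} (v : {v // v ≠ r}) (h₀ : j.val ≠ 0)
    (hₖ : j.val ≠ k) :
    ∃ d, cycleVertex r k v j = .inr (v, d) := by
  simp [cycleVertex, h₀, hₖ]

theorem not_cycleGraph_adj {i j : Fin (2 * k)} (hk : 2 ≤ k) (hi : i.val = 0 ∨ i.val = k)
    (hj : j.val = 0 ∨ j.val = k) : ¬(cycleGraph (2 * k)).Adj i j := by
  intro hadj
  have hij : i.val ≠ j.val := Fin.val_ne_of_ne hadj.ne
  have h₁ : (2 * k - k + 0) % (2 * k) = k := by rw [Nat.mod_eq_of_lt] <;> omega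
  have h₂ : (2 * k - 0 + k) % (2 * k) = k := by
    rw [Nat.sub_zero, Nat.add_comm, Nat.add_mod_right, Nat.mod_eq_of_lt (by omega)]
  rw [cycleGraph_adj', Fin.val_sub, Fin.val_sub] at hadj
  rcases hi with hi | hi <;> rcases hj with hj | hj <;> rw [hi, hj] at hadj <;>
    omega

variable (r k) in
def cycleEmbedding (v : {v // v ≠ r}) : Fin (2 * k) ↪ Vertex r k :=
  ⟨cycleVertex r k v, cycleVertex_injective v⟩

variable (r k) in
def cycleCopy (v : {v // v ≠ r}) : SimpleGraph (Vertex r k) :=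
  (cycleGraph (2 * k)).map (cycleEmbedding r k v)

variable (r k) in
def starConnector : SimpleGraph (Vertex r k) :=
  ⨆ v, cycleCopy r k v

theorem exists_inr_mem_of_mem_edgeSet_cycleCopy (hk : 2 ≤ k) {v : {v // v ≠ r}}
    {e : Sym2 (Vertex r k)} (he : e ∈ (cycleCopy r k v).edgeSet) :
    ∃ d, .inr (v, d) ∈ e := by
  induction e using Sym2.ind with | _ a b =>
  obtain ⟨i, j, hij, rfl, rfl⟩ := (map_adj _ _ _ _).1 he
  by_cases hi : i.val = 0 ∨ i.val = k
  · have hj : ¬(j.val = 0 ∨ j.val = k) := fun hj => not_cycleGraph_adj hk hi hj hij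
    obtain ⟨d, hd⟩ := cycleVertex_eq_inr (k := k) v (by omega) (by omega : j.val ≠ k)
    exact ⟨d, by simp [cycleEmbedding, hd]⟩
  · obtain ⟨d, hd⟩ := cycleVertex_eq_inr (k := k) v (by omega) (by omega : i.val ≠ k)
    exact ⟨d, by simp [cycleEmbedding, hd]⟩

theorem disjoint_edgeSet_cycleCopy (hk : 2 ≤ k) {v w : {v // v ≠ r}} (hvw : v ≠ w) :
    Disjoint (cycleCopy r k v).edgeSet (cycleCopy r k w).edgeSet := by
  refine Set.disjoint_left.2 fun e hv hw => ?_
  obtain ⟨d, hd⟩ := exists_inr_mem_of_mem_edgeSet_cycleCopy hk hv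
  rw [cycleCopy, edgeSet_map] at hw
  obtain ⟨e, -, rfl⟩ := hw
  obtain ⟨j, -, hj⟩ := Sym2.mem_map.1 hd
  exact hvw (eq_of_cycleVertex_eq_inr hj)

theorem hasCycleDecomp_starConnector [Finite V] (hk : 2 ≤ k) :
    (starConnector r k).HasCycleDecomp (2 * k) :=
  HasCycleDecomp.iSup (fun _ _ => disjoint_edgeSet_cycleCopy hk)
    fun _ => (hasCycleDecomp_cycleGraph (by omega)).map _

theorem disjoint_edgeSet_map_inl_starConnector (hk : 2 ≤ k) (H : SimpleGraph V) :
    Disjoint (H.map Function.Embedding.inl).edgeSet (starConnector r k).edgeSet := by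
  refine Set.disjoint_left.2 fun e hH hS => ?_
  rw [starConnector, edgeSet_iSup, Set.mem_iUnion] at hS
  obtain ⟨v, hv⟩ := hS
  obtain ⟨d, hd⟩ := exists_inr_mem_of_mem_edgeSet_cycleCopy hk hv
  rw [edgeSet_map] at hH
  obtain ⟨e, -, rfl⟩ := hH
  obtain ⟨x, -, hx⟩ := Sym2.mem_map.1 hd
  exact Sum.inl_ne_inr hx

theorem reachable_cycleVertex (v : {v // v ≠ r}) (i j : Fin (2 * k)) :
    (starConnector r k).Reachable (cycleVertex r k v i) (cycleVertex r k v j) :=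
  ((cycleGraph_preconnected i j).map (Embedding.map (cycleEmbedding r k v) _).toHom).mono
    (le_iSup (cycleCopy r k) v)

theorem starConnector_preconnected (hk : 0 < k) : (starConnector r k).Preconnected := by
  suffices h : ∀ x, (starConnector r k).Reachable (.inl r) x from
    fun x y => (h x).symm.trans (h y)
  rintro (x | ⟨v, d⟩)
  · by_cases hx : x = r
    · rw [hx]
    · simpa [cycleVertex_zero, cycleVertex_k, hk] using
        reachable_cycleVertex ⟨x, hx⟩ ⟨0, by omega⟩ (⟨k, by omega⟩ : Fin (2 * k))
  · obtain ⟨j, hj⟩ := exists_cycleVertex_eq_inr v d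
    simpa [cycleVertex_zero, hj, hk] using reachable_cycleVertex v ⟨0, by omega⟩ j

theorem card_vertex_le [Fintype V] [DecidableEq V] (hk : 0 < k) :
    Fintype.card (Vertex r k) ≤ (2 * k - 1) * Fintype.card V := by
  have := Fintype.card_subtype_le (· ≠ r)
  calc Fintype.card (Vertex r k)
    _ = Fintype.card V + Fintype.card {v // v ≠ r} * (2 * k - 2) := by
        rw [Fintype.card_sum, Fintype.card_prod, Fintype.card_fin]
    _ ≤ Fintype.card V + Fintype.card V * (2 * k - 2) := by gcongr
    _ = (2 * k - 1) * Fintype.card V := by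
        rw [show 2 * k - 1 = 1 + (2 * k - 2) by omega]
        ring

end StarConnector

open StarConnector

universe u

theorem stmt_17_general {V : Type u} [Fintype V] (H : SimpleGraph V)
    (k : ℕ) (hk : 2 ≤ k) :
    ∃ (W : Type u) (_ : Fintype W) (ι : V ↪ W) (Hcon : SimpleGraph W),
      Disjoint (H.map ι).edgeSet Hcon.edgeSet ∧
      ((H.map ι) ⊔ Hcon).Preconnected ∧
      Hcon.HasCycleDecomp (2 * k) ∧
      Fintype.card W ≤ (2 * k - 1) * Fintype.card V := by
  classical
  rcases isEmpty_or_nonempty V with _ | ⟨⟨r⟩⟩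
  · exact ⟨V, inferInstance, .refl V, ⊥, by simp, isEmptyElim,
      ⟨[], by simp, by simp, by simp⟩, by simp⟩
  · exact ⟨_, inferInstance, .inl, starConnector r k,
      disjoint_edgeSet_map_inl_starConnector hk H,
      (starConnector_preconnected (by omega)).mono le_sup_right, hasCycleDecomp_starConnector hk,
      card_vertex_le (by omega)⟩

/-- For every graph `H` without isolated vertices and every `k ≥ 2`, there is a
`C_{2k}`-connector for `H`: a graph `Hcon` on a vertex set `W` extending `V(H)`,
edge-disjoint from (the copy of) `H`, such that `H ∪ Hcon` is connected, `Hcon` has a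
`C_{2k}`-decomposition, and `|V(H ∪ Hcon)| ≤ (2k-1)|V(H)|`. -/
theorem stmt_17 {V : Type u} [Fintype V] (H : SimpleGraph V)
    (hiso : ∀ v : V, ∃ u : V, H.Adj v u) (k : ℕ) (hk : 2 ≤ k) :
    ∃ (W : Type u) (_ : Fintype W) (ι : V ↪ W) (Hcon : SimpleGraph W),
      Disjoint (H.map ι).edgeSet Hcon.edgeSet ∧
      ((H.map ι) ⊔ Hcon).Preconnected ∧
      Hcon.HasCycleDecomp (2 * k) ∧
      Fintype.card W ≤ (2 * k - 1) * Fintype.card V :=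
  stmt_17_general H k hk
end

section
/- Let X have a hypergeometric distribution with parameters N, n, m (i.e., X = |S ∩ {1,…,m}| for a uniformly random n-subset S of {1,…,N}). Then for every t ≥ 0, P(|X − E[X]| ≥ t) ≤ 2·exp(−2t²/n). -/
/-!
The generating function `∑_S x ^ |S ∩ {1,…,m}|` over the `n`-subsets `S` is the `n`-th elementary
symmetric function of `N` numbers (`m` copies of `x` and `N - m` ones). By Maclaurin's inequality
it is at most `choose N n` times the `n`-th power of their mean `1 - p + p x`, `p = m / N`, which is
the generating function of the binomial distribution. So the moment generating function of the
hypergeometric count is dominated by the binomial one, which Hoeffding's lemma bounds by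
`exp (n (p θ + θ² / 8))`; Chernoff's bound on both tails, with `θ = ± 4 t / n`, concludes.
-/

open Finset Real ProbabilityTheory unitInterval MeasureTheory

/-- The tangent line of `x ↦ x ^ (k + 1)` at `b` lies below its graph. -/
lemma pow_mul_tangent_le {a b : ℝ} (ha : 0 ≤ a) (hb : 0 ≤ b) (k : ℕ) :
    b ^ k * ((k + 1) * a - k * b) ≤ a ^ (k + 1) := by
  rcases hb.eq_or_lt with rfl | hb
  · rcases k with _ | k <;> simp [ha]
  have h := one_add_mul_le_pow (a := a / b - 1) (by linarith [div_nonneg ha hb.le]) (k + 1)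
  rw [add_sub_cancel, div_pow, le_div_iff₀ (by positivity)] at h
  push_cast at h
  calc b ^ k * ((k + 1) * a - k * b) = (1 + (k + 1) * (a / b - 1)) * b ^ (k + 1) := by
        field_simp; ring
    _ ≤ a ^ (k + 1) := h

namespace Multiset

lemma esymm_cons_succ {R : Type*} [CommSemiring R] (a : R) (s : Multiset R) (k : ℕ) :
    (a ::ₘ s).esymm (k + 1) = s.esymm (k + 1) + a * s.esymm k := by
  simp [esymm, map_map, sum_map_mul_left]

/-- A weak form of Maclaurin's inequality: `e_k / choose N k ≤ (e_1 / N) ^ k`. -/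
lemma esymm_le_choose_mul_pow (s : Multiset ℝ) (hs : ∀ x ∈ s, 0 ≤ x) (k : ℕ) :
    s.esymm k ≤ (card s).choose k * (s.sum / card s) ^ k := by
  induction s using Multiset.induction generalizing k with
  | empty => rcases k with _ | k <;> simp [esymm, powersetCard_zero_right]
  | cons a s ih =>
    rcases k with _ | k
    · simp [esymm]
    have ha : 0 ≤ a := hs a (mem_cons_self a s)
    have hs' : ∀ x ∈ s, 0 ≤ x := fun x hx => hs x (mem_cons_of_mem hx)
    rw [esymm_cons_succ, sum_cons, card_cons]
    set N := card s
    have hc' : 0 ≤ s.sum / N := div_nonneg (sum_nonneg hs') N.cast_nonneg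
    have hc : 0 ≤ (a + s.sum) / (N + 1 : ℕ) :=
      div_nonneg (add_nonneg ha (sum_nonneg hs')) (by positivity)
    have hmean : ((N + 1 : ℕ) : ℝ) * ((a + s.sum) / (N + 1 : ℕ)) = N * (s.sum / N) + a := by
      rcases eq_or_ne N 0 with hN | hN
      · simp [hN, card_eq_zero.1 hN]
      · field_simp; ring
    generalize s.sum / N = c' at hc' hmean ih
    generalize (a + s.sum) / (N + 1 : ℕ) = c at hc hmean ⊢
    have pascal : ((N + 1).choose (k + 1) : ℝ) = N.choose k + N.choose (k + 1) := by
      exact_mod_cast Nat.choose_succ_succ N k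
    have absorb : ((N + 1 : ℕ) : ℝ) * N.choose k = (N + 1).choose (k + 1) * (k + 1 : ℕ) := by
      exact_mod_cast Nat.add_one_mul_choose_eq N k
    push_cast at absorb hmean ⊢
    have key : (N + 1) * (N.choose (k + 1) * c' ^ (k + 1) + a * (N.choose k * c' ^ k)) =
        (N + 1) * ((N + 1).choose (k + 1) * (c' ^ k * ((k + 1) * c - k * c'))) := by
      linear_combination (-(N + 1) * c' ^ (k + 1)) * pascal + (a * c' ^ k - c' ^ (k + 1)) * absorb
        - ((N + 1).choose (k + 1) * (k + 1) * c' ^ k) * hmean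
    calc s.esymm (k + 1) + a * s.esymm k
        ≤ N.choose (k + 1) * c' ^ (k + 1) + a * (N.choose k * c' ^ k) := by
          gcongr
          exacts [ih hs' _, ih hs' _]
      _ = (N + 1).choose (k + 1) * (c' ^ k * ((k + 1) * c - k * c')) :=
          mul_left_cancel₀ (by positivity) key
      _ ≤ (N + 1).choose (k + 1) * c ^ (k + 1) := by
          gcongr
          exact pow_mul_tangent_le hc hc' k

end Multiset

/-- Hoeffding's lemma for a Bernoulli variable with parameter `p`. -/
lemma one_sub_add_mul_exp_le (p : I) (θ : ℝ) :
    1 - p + p * exp θ ≤ exp (p * θ + θ ^ 2 / 8) := by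
  have hX : ∀ᵐ x ∂Ber((1 : ℝ), 0, p), x ∈ Set.Icc (0 : ℝ) 1 := by
    rw [ae_iff]
    exact bernoulliMeasure_apply_of_notMem_of_notMem _ measurableSet_Icc.compl (by simp) (by simp)
  have h := (hasSubgaussianMGF_of_mem_Icc measurable_id.aemeasurable hX).mgf_le θ
  norm_num [mgf, integral_bernoulliMeasure] at h
  calc 1 - p + p * exp θ
      = (p * exp (θ * (1 - p)) + (1 - p) * exp (-(θ * p))) * exp (p * θ) := by
        rw [add_mul, mul_assoc, mul_assoc, ← exp_add, ← exp_add,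
          show θ * (1 - p) + p * θ = θ by ring, show -(θ * p) + p * θ = 0 by ring, exp_zero]
        ring
    _ ≤ exp (1 / 4 * θ ^ 2 / 2) * exp (p * θ) := by gcongr
    _ = exp (p * θ + θ ^ 2 / 8) := by rw [← exp_add]; ring_nf

section Hypergeometric

variable {ι : Type*} (s : Finset ι) (P : ι → Prop) [DecidablePred P]

lemma sum_powersetCard_pow_card_filter_le (hs : s.Nonempty) (n : ℕ) {x : ℝ} (hx : 0 ≤ x) :
    ∑ S ∈ s.powersetCard n, x ^ #(S.filter P) ≤
      (#s).choose n * (1 - #(s.filter P) / #s + #(s.filter P) / #s * x) ^ n := by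
  have h := Multiset.esymm_le_choose_mul_pow (s.val.map fun i => if P i then x else 1)
    (by simp only [Multiset.mem_map]; rintro _ ⟨i, -, rfl⟩; split_ifs <;> positivity) n
  rw [Finset.esymm_map_val, Multiset.card_map, card_val, Finset.sum_map_val, sum_ite,
    sum_const, sum_const, nsmul_eq_mul, nsmul_eq_mul, mul_one] at h
  simp only [prod_ite, prod_const, one_pow, mul_one] at h
  convert h using 3
  have hsplit : (#(s.filter P) : ℝ) + #(s.filter (¬P ·)) = #s := by
    exact_mod_cast card_filter_add_card_filter_not P
  have : (#s : ℝ) ≠ 0 := by simp [hs.ne_empty]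
  field_simp
  linear_combination -hsplit

lemma sum_exp_mul_card_filter_sub_le (n : ℕ) (θ : ℝ) :
    ∑ S ∈ s.powersetCard n, exp (θ * (#(S.filter P) - n * (#(s.filter P) / #s))) ≤
      #(s.powersetCard n) * exp (n * θ ^ 2 / 8) := by
  rcases s.eq_empty_or_nonempty with rfl | hs
  · rcases n with _ | n
    · simp
    · simp [powersetCard_eq_empty.2 (by simp : #(∅ : Finset ι) < n + 1)]
  set q : ℝ := #(s.filter P) / #s
  have hq : q ∈ I :=
    ⟨by positivity, div_le_one_of_le₀ (by exact_mod_cast card_filter_le s P) (by positivity)⟩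
  have hbase : 0 ≤ 1 - q + q * exp θ :=
    add_nonneg (sub_nonneg.2 hq.2) (mul_nonneg hq.1 (exp_pos θ).le)
  calc ∑ S ∈ s.powersetCard n, exp (θ * (#(S.filter P) - n * q))
      = (∑ S ∈ s.powersetCard n, exp θ ^ #(S.filter P)) * exp (-(n * q * θ)) := by
        rw [sum_mul]
        refine sum_congr rfl fun S _ => ?_
        rw [← exp_nat_mul, ← exp_add]
        ring_nf
    _ ≤ (#s).choose n * (1 - q + q * exp θ) ^ n * exp (-(n * q * θ)) := by
        gcongr
        exact sum_powersetCard_pow_card_filter_le s P hs n (exp_pos θ).le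
    _ ≤ (#s).choose n * exp (q * θ + θ ^ 2 / 8) ^ n * exp (-(n * q * θ)) := by
        gcongr
        exact one_sub_add_mul_exp_le ⟨q, hq⟩ θ
    _ = #(s.powersetCard n) * exp (n * θ ^ 2 / 8) := by
        rw [card_powersetCard, ← exp_nat_mul, mul_assoc, ← exp_add]
        ring_nf

end Hypergeometric

section Chernoff

variable {α : Type*} (B : Finset α) (g : α → ℝ)

lemma card_filter_le_mul_exp_le_sum (c : ℝ) :
    #(B.filter (c ≤ g ·)) * exp c ≤ ∑ a ∈ B, exp (g a) :=
  calc #(B.filter (c ≤ g ·)) * exp c = ∑ _a ∈ B.filter (c ≤ g ·), exp c := by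
        rw [sum_const, nsmul_eq_mul]
    _ ≤ ∑ a ∈ B.filter (c ≤ g ·), exp (g a) :=
        sum_le_sum fun a ha => exp_le_exp.2 (mem_filter.1 ha).2
    _ ≤ ∑ a ∈ B, exp (g a) :=
        sum_le_sum_of_subset_of_nonneg (filter_subset _ _) fun a _ _ => (exp_pos _).le

variable {B g} {c t : ℝ}

lemma card_filter_le_le_exp_mul_card (hc : 0 ≤ c) (ht : 0 ≤ t)
    (hg : ∀ θ, 0 ≤ θ → ∑ a ∈ B, exp (θ * g a) ≤ #B * exp (c * θ ^ 2 / 2)) :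
    #(B.filter (t ≤ g ·)) ≤ exp (-t ^ 2 / (2 * c)) * #B := by
  rcases hc.eq_or_lt with rfl | hc
  -- For `c = 0` the bound is `exp 0 * #B`, as `x / 0 = 0`.
  · simpa using card_filter_le B _
  set θ := t / c
  have hθ : 0 ≤ θ := by positivity
  have hmono : #(B.filter (t ≤ g ·)) ≤ #(B.filter (θ * t ≤ θ * g ·)) :=
    card_le_card (monotone_filter_right B fun _ _ h => mul_le_mul_of_nonneg_left h hθ)
  calc (#(B.filter (t ≤ g ·)) : ℝ)
      ≤ #(B.filter (θ * t ≤ θ * g ·)) * exp (θ * t) / exp (θ * t) := by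
        rw [mul_div_cancel_right₀ _ (exp_pos _).ne']
        exact_mod_cast hmono
    _ ≤ #B * exp (c * θ ^ 2 / 2) / exp (θ * t) := by
        gcongr ?_ / _
        exact (card_filter_le_mul_exp_le_sum B (θ * g ·) (θ * t)).trans (hg θ hθ)
    _ = exp (-t ^ 2 / (2 * c)) * #B := by
        rw [mul_div_assoc, ← exp_sub, mul_comm]
        congr 2
        simp only [θ]
        field_simp
        ring

lemma card_filter_le_abs_le_two_mul_exp_mul_card (hc : 0 ≤ c) (ht : 0 ≤ t)
    (hg : ∀ θ, ∑ a ∈ B, exp (θ * g a) ≤ #B * exp (c * θ ^ 2 / 2)) :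
    #(B.filter (t ≤ |g ·|)) ≤ 2 * exp (-t ^ 2 / (2 * c)) * #B := by
  classical
  have hsplit : B.filter (t ≤ |g ·|) ⊆ B.filter (t ≤ g ·) ∪ B.filter (t ≤ -g ·) := by
    intro a
    simp only [mem_filter, mem_union, le_abs', le_neg]
    tauto
  have hupper := card_filter_le_le_exp_mul_card hc ht fun θ _ => hg θ
  have hlower := card_filter_le_le_exp_mul_card (g := (-g ·)) hc ht fun θ _ => by
    simpa [neg_sq, mul_neg, neg_mul] using hg (-θ)
  calc (#(B.filter (t ≤ |g ·|)) : ℝ) ≤ #(B.filter (t ≤ g ·)) + #(B.filter (t ≤ -g ·)) := by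
        exact_mod_cast (card_le_card hsplit).trans (card_union_le _ _)
    _ ≤ 2 * exp (-t ^ 2 / (2 * c)) * #B := by linarith

end Chernoff

theorem stmt_18_general (N n m : ℕ) (hm : m ≤ N) (t : ℝ) (ht : 0 ≤ t) :
    ((((Finset.univ : Finset (Fin N)).powersetCard n).filter fun S =>
        t ≤ |((S.filter fun i : Fin N => i.val < m).card : ℝ) -
              (n : ℝ) * m / N|).card : ℝ) ≤
      2 * Real.exp (-2 * t ^ 2 / n) *
        (((Finset.univ : Finset (Fin N)).powersetCard n).card : ℝ) := by
  have hmean : (n : ℝ) * m / N =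
      n * (#(univ.filter fun i : Fin N => i.val < m) / #(univ : Finset (Fin N))) := by
    rw [Fin.card_filter_val_lt, min_eq_right hm, card_univ, Fintype.card_fin, mul_div_assoc]
  have hexp : -2 * t ^ 2 / n = -t ^ 2 / (2 * (n / 4)) := by ring
  rw [hmean, hexp]
  refine card_filter_le_abs_le_two_mul_exp_mul_card (by positivity) ht fun θ => ?_
  refine (sum_exp_mul_card_filter_sub_le univ _ n θ).trans_eq ?_
  ring_nf

/-- Hoeffding's inequality for the hypergeometric distribution with parameters `N`, `n`,
`m`: if `S` is a uniformly random `n`-subset of `{1, …, N}` and `X = |S ∩ {1, …, m}|`,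
then `P(|X - E[X]| ≥ t) ≤ 2 exp(-2t²/n)`, where `E[X] = nm/N`. Formulated by counting:
the number of `n`-subsets `S` with `||S ∩ {1,…,m}| - nm/N| ≥ t` is at most
`2 exp(-2t²/n)` times the total number of `n`-subsets. -/
theorem stmt_18 (N n m : ℕ) (hn : n ≤ N) (hm : m ≤ N) (t : ℝ) (ht : 0 ≤ t) :
    ((((Finset.univ : Finset (Fin N)).powersetCard n).filter fun S =>
        t ≤ |((S.filter fun i : Fin N => i.val < m).card : ℝ) -
              (n : ℝ) * m / N|).card : ℝ) ≤
      2 * Real.exp (-2 * t ^ 2 / n) *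
        (((Finset.univ : Finset (Fin N)).powersetCard n).card : ℝ) :=
  stmt_18_general N n m hm t ht
end
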